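/- arXiv:2308.06298 — 7 statements merged into one kernel-verified Lean document; each statement's English description precedes it below -/
import Mathlib

section
/- In a finite controlled Markov system there exists a deterministic stationary policy g* such that, for every i ∈ Bᶜ, p(B|i,g*(i)) + Σ_{j∈Bᶜ} p(j|i,g*(i)) q_j^* = min_{a∈A(i)} [ p(B|i,a) + Σ_{j∈Bᶜ} p(j|i,a) q_j^* ], and any such g* is optimal: q_i^{g*} = q_i^* for all i ∈ Bᶜ. In particular an optimal deterministic stationary policy exists. -/
open Finset

variable {S A : Type*}

/-- `hitLe p B n i = P_i(τ_B ≤ n)`: the probability that the Markov chain with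
transition kernel `p`, started at `i`, hits the set `B` within `n` steps. -/
noncomputable def hitLe [Fintype S] [DecidableEq S] (p : S → S → ℝ) (B : Finset S) :
    ℕ → S → ℝ
  | 0, i => if i ∈ B then 1 else 0
  | n + 1, i => if i ∈ B then 1 else ∑ j, p i j * hitLe p B n j

/-- `hitProb p B i = P_i(τ_B < ∞)`, the probability of ever hitting `B` from `i`. -/
noncomputable def hitProb [Fintype S] [DecidableEq S] (p : S → S → ℝ) (B : Finset S)
    (i : S) : ℝ :=
  ⨆ n, hitLe p B n i

/-- `failLe p B π n h i = P^π(τ_B ≤ n)` for the controlled process with transition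
law `p`, history-dependent randomized policy `π`, past history `h` and current state `i`. -/
noncomputable def failLe [Fintype S] [Fintype A] [DecidableEq S]
    (p : S → A → S → ℝ) (B : Finset S) (π : List (S × A) → S → A → ℝ) :
    ℕ → List (S × A) → S → ℝ
  | 0, _, i => if i ∈ B then 1 else 0
  | n + 1, h, i =>
      if i ∈ B then 1
      else ∑ a, π h i a * ∑ j, p i a j * failLe p B π n (h ++ [(i, a)]) j

/-- `failProb p B π i = P_i^π(τ_B < ∞)`, the failure probability under policy `π`. -/
noncomputable def failProb [Fintype S] [Fintype A] [DecidableEq S]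
    (p : S → A → S → ℝ) (B : Finset S) (π : List (S × A) → S → A → ℝ) (i : S) : ℝ :=
  ⨆ n, failLe p B π n [] i

/-- `π` is a randomized history-dependent policy for the action sets `Acts`. -/
def IsPolicy (Acts : S → Finset A) (π : List (S × A) → S → A → ℝ) : Prop :=
  ∀ h i, (∀ a, 0 ≤ π h i a) ∧ (∑ a ∈ Acts i, π h i a = 1) ∧ ∀ a ∉ Acts i, π h i a = 0

/-- `failStar Acts p B i = q_i^* = inf_π P_i^π(τ_B < ∞)`. -/
noncomputable def failStar [Fintype S] [Fintype A] [DecidableEq S]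
    (Acts : S → Finset A) (p : S → A → S → ℝ) (B : Finset S) (i : S) : ℝ :=
  sInf {x | ∃ π, IsPolicy Acts π ∧ x = failProb p B π i}

section Aux

open Filter Topology

/-- Exchange a countable supremum with a finite sum, for monotone bounded sequences. -/
lemma ciSup_finset_sum_aux {κ : Type*} (s : Finset κ) (f : κ → ℕ → ℝ)
    (hm : ∀ k ∈ s, Monotone (f k)) (hb : ∀ k ∈ s, BddAbove (Set.range (f k))) :
    ⨆ n, ∑ k ∈ s, f k n = ∑ k ∈ s, ⨆ n, f k n := by
  have hle : ∀ n, ∑ k ∈ s, f k n ≤ ∑ k ∈ s, ⨆ m, f k m :=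
    fun n => Finset.sum_le_sum fun k hk => le_ciSup (hb k hk) n
  have hbs : BddAbove (Set.range fun n => ∑ k ∈ s, f k n) := by
    refine ⟨∑ k ∈ s, ⨆ m, f k m, ?_⟩
    rintro x ⟨n, rfl⟩
    exact hle n
  have htend : Tendsto (fun n => ∑ k ∈ s, f k n) atTop (𝓝 (∑ k ∈ s, ⨆ n, f k n)) :=
    tendsto_finset_sum s fun k hk => tendsto_atTop_ciSup (hm k hk) (hb k hk)
  refine le_antisymm (ciSup_le hle) ?_
  exact le_of_tendsto htend (Eventually.of_forall fun n => le_ciSup hbs n)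

lemma ciSup_const_add_aux (c : ℝ) (g : ℕ → ℝ) (hb : BddAbove (Set.range g)) :
    ⨆ n, (c + g n) = c + ⨆ n, g n := by
  obtain ⟨M, hM⟩ := hb
  have hb' : BddAbove (Set.range fun n => c + g n) := by
    refine ⟨c + M, ?_⟩
    rintro x ⟨n, rfl⟩
    exact add_le_add (le_refl c) (hM ⟨n, rfl⟩)
  refine le_antisymm (ciSup_le fun n => add_le_add (le_refl c) (le_ciSup ⟨M, hM⟩ n)) ?_
  have : ⨆ n, g n ≤ (⨆ n, (c + g n)) - c := by
    refine ciSup_le fun n => ?_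
    have := le_ciSup hb' n
    linarith
  linarith

variable {S A : Type*} [Fintype S] [Fintype A] [DecidableEq S] [DecidableEq A]

lemma failLe_of_mem (p : S → A → S → ℝ) (B : Finset S) (π : List (S × A) → S → A → ℝ)
    (n : ℕ) (h : List (S × A)) {i : S} (hi : i ∈ B) : failLe p B π n h i = 1 := by
  cases n <;> simp [failLe, hi]

lemma hitLe_of_mem (p : S → S → ℝ) (B : Finset S) (n : ℕ) {i : S} (hi : i ∈ B) :
    hitLe p B n i = 1 := by
  cases n <;> simp [hitLe, hi]

variable {Acts : S → Finset A} {p : S → A → S → ℝ} {B : Finset S}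
variable (hp0 : ∀ i, ∀ a ∈ Acts i, ∀ j, 0 ≤ p i a j)
variable (hp1 : ∀ i, ∀ a ∈ Acts i, ∑ j, p i a j = 1)
variable {π : List (S × A) → S → A → ℝ} (hπ : IsPolicy Acts π)

include hp0 hπ in
lemma failLe_nonneg : ∀ n h i, 0 ≤ failLe p B π n h i := by
  intro n
  induction n with
  | zero =>
    intro h i
    rw [failLe]
    split <;> norm_num
  | succ n ih =>
    intro h i
    rw [failLe]
    split
    · norm_num
    · refine Finset.sum_nonneg fun a _ => ?_
      by_cases ha : a ∈ Acts i
      · exact mul_nonneg ((hπ h i).1 a) (Finset.sum_nonneg fun j _ =>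
          mul_nonneg (hp0 i a ha j) (ih _ j))
      · simp [(hπ h i).2.2 a ha]

include hp0 hp1 hπ in
lemma failLe_le_one : ∀ n h i, failLe p B π n h i ≤ 1 := by
  intro n
  induction n with
  | zero =>
    intro h i
    rw [failLe]
    split <;> norm_num
  | succ n ih =>
    intro h i
    rw [failLe]
    split
    · norm_num
    · calc ∑ a, π h i a * ∑ j, p i a j * failLe p B π n (h ++ [(i, a)]) j
          = ∑ a ∈ Acts i, π h i a * ∑ j, p i a j * failLe p B π n (h ++ [(i, a)]) j := by
            refine (Finset.sum_subset (Finset.subset_univ _) fun a _ ha => ?_).symm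
            simp [(hπ h i).2.2 a ha]
        _ ≤ ∑ a ∈ Acts i, π h i a * 1 := by
            refine Finset.sum_le_sum fun a ha => mul_le_mul_of_nonneg_left ?_ ((hπ h i).1 a)
            calc ∑ j, p i a j * failLe p B π n (h ++ [(i, a)]) j
                ≤ ∑ j, p i a j * 1 := Finset.sum_le_sum fun j _ =>
                  mul_le_mul_of_nonneg_left (ih _ j) (hp0 i a ha j)
              _ = 1 := by simp [hp1 i a ha]
        _ = 1 := by simp only [mul_one]; exact (hπ h i).2.1

include hp0 hπ in
lemma failLe_mono : ∀ n h i, failLe p B π n h i ≤ failLe p B π (n + 1) h i := by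
  intro n
  induction n with
  | zero =>
    intro h i
    by_cases hi : i ∈ B
    · simp [failLe, hi]
    · rw [show failLe p B π 0 h i = 0 by simp [failLe, hi]]
      exact failLe_nonneg hp0 hπ 1 h i
  | succ n ih =>
    intro h i
    rw [failLe, failLe]
    split
    · exact le_refl 1
    · refine Finset.sum_le_sum fun a _ => ?_
      by_cases ha : a ∈ Acts i
      · exact mul_le_mul_of_nonneg_left (Finset.sum_le_sum fun j _ =>
          mul_le_mul_of_nonneg_left (ih _ j) (hp0 i a ha j)) ((hπ h i).1 a)
      · simp [(hπ h i).2.2 a ha]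

include hp0 hπ in
lemma failLe_monotone (h : List (S × A)) (i : S) :
    Monotone fun n => failLe p B π n h i :=
  monotone_nat_of_le_succ fun n => failLe_mono hp0 hπ n h i

include hp0 hp1 hπ in
lemma failLe_bddAbove (h : List (S × A)) (i : S) :
    BddAbove (Set.range fun n => failLe p B π n h i) := by
  refine ⟨1, ?_⟩
  rintro x ⟨n, rfl⟩
  exact failLe_le_one hp0 hp1 hπ n h i

include hp0 hp1 hπ in
lemma failProb_nonneg (i : S) : 0 ≤ failProb p B π i :=
  le_trans (failLe_nonneg hp0 hπ 0 [] i) (le_ciSup (failLe_bddAbove hp0 hp1 hπ [] i) 0)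

lemma failLe_shift (p : S → A → S → ℝ) (B : Finset S) (π : List (S × A) → S → A → ℝ) :
    ∀ (n : ℕ) (h0 h : List (S × A)) (i : S),
      failLe p B π n (h0 ++ h) i = failLe p B (fun h' => π (h0 ++ h')) n h i := by
  intro n
  induction n with
  | zero => intro h0 h i; simp [failLe]
  | succ n ih =>
    intro h0 h i
    rw [failLe, failLe]
    split
    · rfl
    · refine Finset.sum_congr rfl fun a _ => ?_
      congr 1
      refine Finset.sum_congr rfl fun j _ => ?_
      congr 1
      rw [List.append_assoc, ih]

lemma IsPolicy.shift (hπ : IsPolicy Acts π) (h0 : List (S × A)) :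
    IsPolicy Acts fun h' => π (h0 ++ h') := fun h i => hπ (h0 ++ h) i

lemma exists_policy (hA : ∀ i, (Acts i).Nonempty) :
    ∃ π : List (S × A) → S → A → ℝ, IsPolicy Acts π := by
  refine ⟨fun _ i a => if a = (hA i).choose then 1 else 0, fun h i => ⟨fun a => ?_, ?_, ?_⟩⟩
  · dsimp only
    split <;> norm_num
  · dsimp only
    rw [Finset.sum_ite_eq' (Acts i) _ (fun _ => (1 : ℝ)), if_pos (hA i).choose_spec]
  · intro a ha
    dsimp only
    have : a ≠ (hA i).choose := fun e => ha (e ▸ (hA i).choose_spec)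
    simp [this]

include hp0 hp1 in
lemma failStar_nonneg (hA : ∀ i, (Acts i).Nonempty) (i : S) : 0 ≤ failStar Acts p B i := by
  obtain ⟨π0, hπ0⟩ := exists_policy hA
  refine le_csInf ⟨failProb p B π0 i, π0, hπ0, rfl⟩ ?_
  rintro x ⟨π', hπ', rfl⟩
  exact failProb_nonneg hp0 hp1 hπ' i

include hp0 hp1 hπ in
lemma failStar_le (i : S) : failStar Acts p B i ≤ failProb p B π i := by
  refine csInf_le ⟨0, ?_⟩ ⟨π, hπ, rfl⟩
  rintro x ⟨π', hπ', rfl⟩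
  exact failProb_nonneg hp0 hp1 hπ' i

include hp0 hp1 hπ in
lemma failProb_step {i : S} (hi : i ∉ B) :
    ∑ a ∈ Acts i, π [] i a *
        ((∑ j ∈ B, p i a j) +
          ∑ j ∈ Bᶜ, p i a j * failProb p B (fun h => π ((i, a) :: h)) j)
      ≤ failProb p B π i := by
  set c : ℝ := ∑ a ∈ Acts i, π [] i a * (∑ j ∈ B, p i a j) with hc
  set F : A × S → ℕ → ℝ := fun aj n =>
    π [] i aj.1 * (p i aj.1 aj.2 *
      failLe p B (fun h => π ((i, aj.1) :: h)) n [] aj.2) with hF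
  have hshiftPol : ∀ a : A, IsPolicy Acts fun h => π ((i, a) :: h) := by
    intro a
    have := hπ.shift [(i, a)]
    simpa using this
  -- step 1 : the one-step recursion for `failLe`
  have hrec : ∀ n, failLe p B π (n + 1) [] i = c + ∑ aj ∈ Acts i ×ˢ Bᶜ, F aj n := by
    intro n
    rw [failLe, if_neg hi]
    have hinner : ∀ a : A, ∀ j : S,
        failLe p B π n [(i, a)] j =
          failLe p B (fun h => π ((i, a) :: h)) n ([] : List (S × A)) j := by
      intro a j
      have := failLe_shift p B π n [(i, a)] [] j
      simpa using this
    simp only [List.nil_append]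
    calc ∑ a, π [] i a * ∑ j, p i a j * failLe p B π n [(i, a)] j
        = ∑ a ∈ Acts i, π [] i a * ∑ j, p i a j * failLe p B π n [(i, a)] j := by
          refine (Finset.sum_subset (Finset.subset_univ (Acts i)) fun a _ ha => ?_).symm
          simp [(hπ [] i).2.2 a ha]
      _ = ∑ a ∈ Acts i, π [] i a *
            ∑ j, p i a j * failLe p B (fun h => π ((i, a) :: h)) n [] j := by
          refine Finset.sum_congr rfl fun a _ => ?_
          congr 1
          refine Finset.sum_congr rfl fun j _ => ?_
          rw [hinner]
      _ = ∑ a ∈ Acts i, (π [] i a * (∑ j ∈ B, p i a j) +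
            ∑ j ∈ Bᶜ, π [] i a *
              (p i a j * failLe p B (fun h => π ((i, a) :: h)) n [] j)) := by
          refine Finset.sum_congr rfl fun a _ => ?_
          have hsplit := Finset.sum_add_sum_compl B fun j =>
            p i a j * failLe p B (fun h => π ((i, a) :: h)) n [] j
          rw [← hsplit, mul_add]
          congr 1
          · congr 1
            exact Finset.sum_congr rfl fun j hj => by
              rw [failLe_of_mem p B _ n [] hj, mul_one]
          · rw [Finset.mul_sum]
      _ = c + ∑ aj ∈ Acts i ×ˢ Bᶜ, F aj n := by
          rw [Finset.sum_add_distrib, Finset.sum_product]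
  -- step 2 : take suprema
  have hFmono : ∀ aj ∈ Acts i ×ˢ Bᶜ, Monotone (F aj) := by
    rintro ⟨a, j⟩ haj
    rw [Finset.mem_product] at haj
    intro m n hmn
    exact mul_le_mul_of_nonneg_left (mul_le_mul_of_nonneg_left
      (failLe_monotone hp0 (hshiftPol a) [] j hmn) (hp0 i a haj.1 j)) ((hπ [] i).1 a)
  have hFbdd : ∀ aj ∈ Acts i ×ˢ Bᶜ, BddAbove (Set.range (F aj)) := by
    rintro ⟨a, j⟩ haj
    rw [Finset.mem_product] at haj
    refine ⟨π [] i a * (p i a j * 1), ?_⟩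
    rintro x ⟨n, rfl⟩
    exact mul_le_mul_of_nonneg_left (mul_le_mul_of_nonneg_left
      (failLe_le_one hp0 hp1 (hshiftPol a) n [] j) (hp0 i a haj.1 j)) ((hπ [] i).1 a)
  have hSbdd : BddAbove (Set.range fun n => ∑ aj ∈ Acts i ×ˢ Bᶜ, F aj n) := by
    refine ⟨∑ aj ∈ Acts i ×ˢ Bᶜ, ⨆ n, F aj n, ?_⟩
    rintro x ⟨n, rfl⟩
    exact Finset.sum_le_sum fun aj haj => le_ciSup (hFbdd aj haj) n
  have hsup1 : ⨆ n, (c + ∑ aj ∈ Acts i ×ˢ Bᶜ, F aj n) =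
      c + ∑ aj ∈ Acts i ×ˢ Bᶜ, ⨆ n, F aj n := by
    rw [ciSup_const_add_aux c _ hSbdd, ciSup_finset_sum_aux _ _ hFmono hFbdd]
  have hFsup : ∀ aj ∈ Acts i ×ˢ Bᶜ,
      (⨆ n, F aj n) = π [] i aj.1 *
        (p i aj.1 aj.2 * failProb p B (fun h => π ((i, aj.1) :: h)) aj.2) := by
    rintro ⟨a, j⟩ haj
    rw [Finset.mem_product] at haj
    simp only [hF, failProb]
    rw [Real.mul_iSup_of_nonneg (hp0 i a haj.1 j),
      Real.mul_iSup_of_nonneg ((hπ [] i).1 a)]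
  -- step 3 : conclude
  have hkey : c + ∑ aj ∈ Acts i ×ˢ Bᶜ, π [] i aj.1 *
      (p i aj.1 aj.2 * failProb p B (fun h => π ((i, aj.1) :: h)) aj.2)
        ≤ failProb p B π i := by
    rw [← Finset.sum_congr rfl hFsup, ← hsup1]
    refine ciSup_le fun n => ?_
    rw [← hrec n]
    exact le_ciSup (failLe_bddAbove hp0 hp1 hπ [] i) (n + 1)
  refine le_trans (le_of_eq ?_) hkey
  rw [Finset.sum_product]
  rw [hc, ← Finset.sum_add_distrib]
  refine Finset.sum_congr rfl fun a _ => ?_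
  simp [Finset.mul_sum, mul_add, mul_assoc]

include hp0 hp1 in
lemma bellman_le_failStar (hA : ∀ i, (Acts i).Nonempty) {i : S} (hi : i ∉ B) :
    (Acts i).inf' (hA i)
        (fun a => (∑ j ∈ B, p i a j) + ∑ j ∈ Bᶜ, p i a j * failStar Acts p B j)
      ≤ failStar Acts p B i := by
  obtain ⟨π0, hπ0⟩ := exists_policy hA
  refine le_csInf ⟨failProb p B π0 i, π0, hπ0, rfl⟩ ?_
  rintro x ⟨π, hπ', rfl⟩
  have hshiftPol : ∀ a : A, IsPolicy Acts fun h => π ((i, a) :: h) := by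
    intro a
    have := hπ'.shift [(i, a)]
    simpa using this
  calc (Acts i).inf' (hA i)
        (fun a => (∑ j ∈ B, p i a j) + ∑ j ∈ Bᶜ, p i a j * failStar Acts p B j)
      = ∑ a ∈ Acts i, π [] i a * (Acts i).inf' (hA i)
          (fun a => (∑ j ∈ B, p i a j) + ∑ j ∈ Bᶜ, p i a j * failStar Acts p B j) := by
        rw [← Finset.sum_mul, (hπ' [] i).2.1, one_mul]
    _ ≤ ∑ a ∈ Acts i, π [] i a *
          ((∑ j ∈ B, p i a j) + ∑ j ∈ Bᶜ, p i a j * failStar Acts p B j) :=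
        Finset.sum_le_sum fun a ha =>
          mul_le_mul_of_nonneg_left (Finset.inf'_le _ ha) ((hπ' [] i).1 a)
    _ ≤ ∑ a ∈ Acts i, π [] i a *
          ((∑ j ∈ B, p i a j) +
            ∑ j ∈ Bᶜ, p i a j * failProb p B (fun h => π ((i, a) :: h)) j) := by
        refine Finset.sum_le_sum fun a ha => mul_le_mul_of_nonneg_left
          (add_le_add (le_refl _) (Finset.sum_le_sum fun j _ => ?_)) ((hπ' [] i).1 a)
        exact mul_le_mul_of_nonneg_left
          (failStar_le hp0 hp1 (hshiftPol a) j) (hp0 i a ha j)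
    _ ≤ failProb p B π i := failProb_step hp0 hp1 hπ' hi

lemma detPol_isPolicy (g : S → A) (hg : ∀ i, g i ∈ Acts i) :
    IsPolicy Acts fun (_ : List (S × A)) i a => if a = g i then (1 : ℝ) else 0 := by
  intro h i
  refine ⟨fun a => ?_, ?_, ?_⟩
  · dsimp only
    split <;> norm_num
  · dsimp only
    rw [Finset.sum_ite_eq' (Acts i) _ (fun _ => (1 : ℝ)), if_pos (hg i)]
  · intro a ha
    dsimp only
    have : a ≠ g i := fun e => ha (e ▸ hg i)
    simp [this]

lemma failLe_det (p : S → A → S → ℝ) (B : Finset S) (g : S → A) :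
    ∀ (n : ℕ) (h : List (S × A)) (i : S),
      failLe p B (fun (_ : List (S × A)) i a => if a = g i then (1 : ℝ) else 0) n h i
        = hitLe (fun i j => p i (g i) j) B n i := by
  intro n
  induction n with
  | zero => intro h i; simp [failLe, hitLe]
  | succ n ih =>
    intro h i
    rw [failLe, hitLe]
    split
    · rfl
    · rw [Finset.sum_eq_single_of_mem (g i) (Finset.mem_univ _)
        (fun b _ hb => by simp [hb])]
      rw [if_pos rfl, one_mul]
      exact Finset.sum_congr rfl fun j _ => by rw [ih]

lemma failProb_det (p : S → A → S → ℝ) (B : Finset S) (g : S → A) (i : S) :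
    failProb p B (fun (_ : List (S × A)) i a => if a = g i then (1 : ℝ) else 0) i
      = hitProb (fun i j => p i (g i) j) B i := by
  unfold failProb hitProb
  exact iSup_congr fun n => failLe_det p B g n [] i

include hp0 hp1 in
lemma hitLe_le_failStar (hA : ∀ i, (Acts i).Nonempty) (g : S → A)
    (hg : ∀ i, g i ∈ Acts i)
    (hopt : ∀ i, i ∉ B →
      (∑ j ∈ B, p i (g i) j) + ∑ j ∈ Bᶜ, p i (g i) j * failStar Acts p B j
        = (Acts i).inf' (hA i) fun a =>
            (∑ j ∈ B, p i a j) + ∑ j ∈ Bᶜ, p i a j * failStar Acts p B j) :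
    ∀ n, ∀ i, i ∉ B → hitLe (fun i j => p i (g i) j) B n i ≤ failStar Acts p B i := by
  intro n
  induction n with
  | zero =>
    intro i hi
    rw [hitLe, if_neg hi]
    exact failStar_nonneg hp0 hp1 hA i
  | succ n ih =>
    intro i hi
    rw [hitLe, if_neg hi]
    calc ∑ j, p i (g i) j * hitLe (fun i j => p i (g i) j) B n j
        = (∑ j ∈ B, p i (g i) j * hitLe (fun i j => p i (g i) j) B n j)
          + ∑ j ∈ Bᶜ, p i (g i) j * hitLe (fun i j => p i (g i) j) B n j :=
          (Finset.sum_add_sum_compl B _).symm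
      _ ≤ (∑ j ∈ B, p i (g i) j) + ∑ j ∈ Bᶜ, p i (g i) j * failStar Acts p B j := by
          refine add_le_add (le_of_eq (Finset.sum_congr rfl fun j hj => by
            rw [hitLe_of_mem _ _ _ hj, mul_one])) ?_
          refine Finset.sum_le_sum fun j hj => ?_
          exact mul_le_mul_of_nonneg_left (ih j (Finset.mem_compl.mp hj))
            (hp0 i (g i) (hg i) j)
      _ ≤ failStar Acts p B i := by
          rw [hopt i hi]
          exact bellman_le_failStar hp0 hp1 hA hi

end Aux

theorem stmt3 [Fintype S] [Fintype A] [DecidableEq S]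
    (Acts : S → Finset A) (hA : ∀ i, (Acts i).Nonempty)
    (p : S → A → S → ℝ) (B : Finset S)
    (hp0 : ∀ i, ∀ a ∈ Acts i, ∀ j, 0 ≤ p i a j)
    (hp1 : ∀ i, ∀ a ∈ Acts i, ∑ j, p i a j = 1) :
    (∃ g : S → A, (∀ i, g i ∈ Acts i) ∧
      ∀ i ∈ Bᶜ,
        (∑ j ∈ B, p i (g i) j) + ∑ j ∈ Bᶜ, p i (g i) j * failStar Acts p B j
          = (Acts i).inf' (hA i) fun a =>
              (∑ j ∈ B, p i a j) + ∑ j ∈ Bᶜ, p i a j * failStar Acts p B j)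
    ∧
    ∀ g : S → A, (∀ i, g i ∈ Acts i) →
      (∀ i ∈ Bᶜ,
        (∑ j ∈ B, p i (g i) j) + ∑ j ∈ Bᶜ, p i (g i) j * failStar Acts p B j
          = (Acts i).inf' (hA i) fun a =>
              (∑ j ∈ B, p i a j) + ∑ j ∈ Bᶜ, p i a j * failStar Acts p B j) →
      ∀ i ∈ Bᶜ, hitProb (fun i j => p i (g i) j) B i = failStar Acts p B i := by
  classical
  constructor
  · have hex : ∀ i, ∃ a, a ∈ Acts i ∧
        ((Acts i).inf' (hA i) fun a =>
          (∑ j ∈ B, p i a j) + ∑ j ∈ Bᶜ, p i a j * failStar Acts p B j)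
        = (∑ j ∈ B, p i a j) + ∑ j ∈ Bᶜ, p i a j * failStar Acts p B j :=
      fun i => Finset.exists_mem_eq_inf' (hA i) _
    choose g hg1 hg2 using hex
    exact ⟨g, hg1, fun i _ => (hg2 i).symm⟩
  · intro g hg hopt i hi
    have hi' : i ∉ B := Finset.mem_compl.mp hi
    have hopt' : ∀ i, i ∉ B →
        (∑ j ∈ B, p i (g i) j) + ∑ j ∈ Bᶜ, p i (g i) j * failStar Acts p B j
          = (Acts i).inf' (hA i) fun a =>
              (∑ j ∈ B, p i a j) + ∑ j ∈ Bᶜ, p i a j * failStar Acts p B j :=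
      fun i h => hopt i (Finset.mem_compl.mpr h)
    refine le_antisymm ?_ ?_
    · exact ciSup_le fun n => hitLe_le_failStar hp0 hp1 hA g hg hopt' n i hi'
    · rw [← failProb_det p B g i]
      exact failStar_le hp0 hp1 (detPol_isPolicy g hg) i
end

section
/- The minimal failure probability vector (q_i^* : i ∈ Bᶜ) is the minimal nonnegative solution of the optimality equation x_i = min_{a∈A(i)} [ p(B|i,a) + Σ_{j∈Bᶜ} p(j|i,a) x_j ] (i ∈ Bᶜ): any nonnegative vector satisfying this system pointwise dominates (q_i^*). -/
open Finset

variable {S A : Type*}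

theorem stmt4 [Fintype S] [Fintype A] [DecidableEq S]
    (Acts : S → Finset A) (hA : ∀ i, (Acts i).Nonempty)
    (p : S → A → S → ℝ) (B : Finset S)
    (hp0 : ∀ i, ∀ a ∈ Acts i, ∀ j, 0 ≤ p i a j)
    (hp1 : ∀ i, ∀ a ∈ Acts i, ∑ j, p i a j = 1)
    (x : S → ℝ) (hx0 : ∀ i ∈ Bᶜ, 0 ≤ x i)
    (hx : ∀ i ∈ Bᶜ,
      x i = (Acts i).inf' (hA i) fun a =>
              (∑ j ∈ B, p i a j) + ∑ j ∈ Bᶜ, p i a j * x j) :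
    ∀ i ∈ Bᶜ, failStar Acts p B i ≤ x i := by
  classical
  -- nonnegativity of failLe for any policy
  have hnn : ∀ (π : List (S × A) → S → A → ℝ), IsPolicy Acts π →
      ∀ n h i, 0 ≤ failLe p B π n h i := by
    intro π hpo n
    induction n with
    | zero => intro h i; simp only [failLe]; split <;> norm_num
    | succ n ih =>
      intro h i
      simp only [failLe]
      split
      · norm_num
      · refine Finset.sum_nonneg fun a _ => ?_
        by_cases ha : a ∈ Acts i
        · exact mul_nonneg ((hpo h i).1 a)
            (Finset.sum_nonneg fun j _ => mul_nonneg (hp0 i a ha j) (ih _ _))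
        · rw [(hpo h i).2.2 a ha, zero_mul]
  -- choose minimizing actions
  have hmin : ∀ i, ∃ a ∈ Acts i,
      ((Acts i).inf' (hA i) fun a =>
        (∑ j ∈ B, p i a j) + ∑ j ∈ Bᶜ, p i a j * x j) =
      (∑ j ∈ B, p i a j) + ∑ j ∈ Bᶜ, p i a j * x j :=
    fun i => Finset.exists_mem_eq_inf' (hA i) _
  choose act hact hval using hmin
  set π : List (S × A) → S → A → ℝ := fun _ i a => if a = act i then 1 else 0 with hπ
  have hpol : IsPolicy Acts π := by
    intro h i
    refine ⟨fun a => by by_cases h' : a = act i <;> simp [hπ, h'], ?_, ?_⟩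
    · rw [hπ]; simp [Finset.sum_ite_eq', hact i]
    · intro a ha
      rw [hπ]
      simp only [ite_eq_right_iff, one_ne_zero]
      intro h'; exact absurd (h' ▸ hact i) ha
  -- key bound by induction
  have key : ∀ n h i, failLe p B π n h i ≤ if i ∈ B then 1 else x i := by
    intro n
    induction n with
    | zero =>
      intro h i
      by_cases hi : i ∈ B <;> simp only [failLe, hi, if_true, if_false, le_refl]
      exact hx0 i (by simpa using hi)
    | succ n ih =>
      intro h i
      by_cases hi : i ∈ B
      · simp [failLe, hi]
      · simp only [failLe, if_neg hi]
        have h1 : (∑ a, π h i a * ∑ j, p i a j * failLe p B π n (h ++ [(i, a)]) j)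
            = ∑ j, p i (act i) j * failLe p B π n (h ++ [(i, act i)]) j := by
          rw [hπ]
          simp [ite_mul, Finset.sum_ite_eq']
        rw [h1]
        have h2 : (∑ j, p i (act i) j * failLe p B π n (h ++ [(i, act i)]) j)
            ≤ ∑ j, p i (act i) j * (if j ∈ B then 1 else x j) :=
          Finset.sum_le_sum fun j _ =>
            mul_le_mul_of_nonneg_left (ih _ j) (hp0 i (act i) (hact i) j)
        have h3 : (∑ j, p i (act i) j * (if j ∈ B then 1 else x j))
            = (∑ j ∈ B, p i (act i) j) + ∑ j ∈ Bᶜ, p i (act i) j * x j := by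
          rw [← Finset.sum_add_sum_compl B]
          congr 1
          · exact Finset.sum_congr rfl fun j hj => by simp [hj]
          · exact Finset.sum_congr rfl fun j hj => by
              simp [Finset.mem_compl.mp hj]
        have h4 : x i = (∑ j ∈ B, p i (act i) j) + ∑ j ∈ Bᶜ, p i (act i) j * x j := by
          rw [hx i (by simpa using hi)]; exact hval i
        rw [h4]
        exact h2.trans (le_of_eq h3)
  intro i hi
  have hiB : i ∉ B := by simpa using hi
  have hfp : failProb p B π i ≤ x i := by
    refine ciSup_le fun n => ?_
    have := key n [] i
    rwa [if_neg hiB] at this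
  have hmem : failProb p B π i ∈ {y | ∃ π', IsPolicy Acts π' ∧ y = failProb p B π' i} :=
    ⟨π, hpol, rfl⟩
  have hbdd : BddBelow {y | ∃ π', IsPolicy Acts π' ∧ y = failProb p B π' i} := by
    refine ⟨0, fun y hy => ?_⟩
    obtain ⟨π', hπ', rfl⟩ := hy
    exact Real.iSup_nonneg fun n => hnn π' hπ' n [] i
  exact (csInf_le hbdd hmem).trans hfp
end

section
/- For a stationary policy g, a state i ∈ Bᶜ lies in the Bᶜ-absorbing set F(g) (the union of all sets F ⊂ Bᶜ with p(F|j,g(j)) = 1 for all j ∈ F) if and only if q_i^g = 0, i.e. the chain started at i under g never hits B almost surely. -/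
open Finset

variable {S A : Type*}

/-- `F ⊂ Bᶜ` is a `Bᶜ`-closed set of the stationary policy `g`:
`p(F | i, g(i)) = 1` for every `i ∈ F`. -/
def IsBcClosed [Fintype S] (p : S → A → S → ℝ) (B : Finset S) (g : S → A)
    (F : Finset S) : Prop :=
  (∀ i ∈ F, i ∉ B) ∧ ∀ i ∈ F, ∑ j ∈ F, p i (g i) j = 1

/-- `Fabs p B g = F(g)`, the `Bᶜ`-absorbing set of `g`: the union of all
`Bᶜ`-closed sets of `g`. -/
def Fabs [Fintype S] (p : S → A → S → ℝ) (B : Finset S) (g : S → A) : Set S :=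
  {i | ∃ F, IsBcClosed p B g F ∧ i ∈ F}

/-- `FStar Acts p B = F_* = ⋃_{g} F(g)`, the union over all stationary policies. -/
def FStar [Fintype S] (Acts : S → Finset A) (p : S → A → S → ℝ) (B : Finset S) : Set S :=
  {i | ∃ g : S → A, (∀ s, g s ∈ Acts s) ∧ i ∈ Fabs p B g}

lemma hitLe_nonneg [Fintype S] [DecidableEq S] (q : S → S → ℝ) (B : Finset S)
    (hq0 : ∀ i j, 0 ≤ q i j) : ∀ n i, 0 ≤ hitLe q B n i := by
  intro n
  induction n with
  | zero => intro i; simp only [hitLe]; split <;> norm_num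
  | succ n ih =>
    intro i
    simp only [hitLe]
    split
    · norm_num
    · exact Finset.sum_nonneg fun j _ => mul_nonneg (hq0 i j) (ih j)

lemma hitLe_le_one [Fintype S] [DecidableEq S] (q : S → S → ℝ) (B : Finset S)
    (hq0 : ∀ i j, 0 ≤ q i j) (hq1 : ∀ i, ∑ j, q i j = 1) :
    ∀ n i, hitLe q B n i ≤ 1 := by
  intro n
  induction n with
  | zero => intro i; simp only [hitLe]; split <;> norm_num
  | succ n ih =>
    intro i
    simp only [hitLe]
    split
    · norm_num
    · calc ∑ j, q i j * hitLe q B n j ≤ ∑ j, q i j * 1 :=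
            Finset.sum_le_sum fun j _ => mul_le_mul_of_nonneg_left (ih j) (hq0 i j)
        _ = 1 := by simp [hq1 i]

lemma hitLe_le_hitProb [Fintype S] [DecidableEq S] (q : S → S → ℝ) (B : Finset S)
    (hq0 : ∀ i j, 0 ≤ q i j) (hq1 : ∀ i, ∑ j, q i j = 1) (n : ℕ) (i : S) :
    hitLe q B n i ≤ hitProb q B i :=
  le_ciSup (f := fun n => hitLe q B n i)
    ⟨1, by rintro x ⟨m, rfl⟩; exact hitLe_le_one q B hq0 hq1 m i⟩ n

theorem stmt6 [Fintype S] [DecidableEq S]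
    (Acts : S → Finset A) (p : S → A → S → ℝ) (g : S → A)
    (hg : ∀ i, g i ∈ Acts i) (B : Finset S)
    (hp0 : ∀ i j, 0 ≤ p i (g i) j) (hp1 : ∀ i, ∑ j, p i (g i) j = 1) :
    ∀ i ∈ Bᶜ,
      i ∈ Fabs p B g ↔ hitProb (fun i j => p i (g i) j) B i = 0 := by
  intro i hiB
  set q : S → S → ℝ := fun i j => p i (g i) j with hq
  constructor
  · rintro ⟨F, ⟨hFB, hFsum⟩, hiF⟩
    -- q j k = 0 for j ∈ F, k ∉ F
    have hout : ∀ j ∈ F, ∀ k, k ∉ F → q j k = 0 := by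
      intro j hj k hk
      have hsplit : ∑ k ∈ F, q j k + ∑ k ∈ Finset.univ \ F, q j k = 1 := by
        rw [add_comm, Finset.sum_sdiff (Finset.subset_univ F)]
        exact hp1 j
      have hzero : ∑ k ∈ Finset.univ \ F, q j k = 0 := by
        rw [hFsum j hj] at hsplit; linarith
      have := (Finset.sum_eq_zero_iff_of_nonneg
        (fun k _ => hp0 j k)).mp hzero k (by simp [hk])
      exact this
    have hzero : ∀ n, ∀ j ∈ F, hitLe q B n j = 0 := by
      intro n
      induction n with
      | zero => intro j hj; simp [hitLe, hFB j hj]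
      | succ n ih =>
        intro j hj
        simp only [hitLe, if_neg (hFB j hj)]
        refine Finset.sum_eq_zero fun k _ => ?_
        by_cases hk : k ∈ F
        · rw [ih k hk, mul_zero]
        · rw [hout j hj k hk, zero_mul]
    have : ∀ n, hitLe q B n i = 0 := fun n => hzero n i hiF
    simp only [hitProb, this, ciSup_const]
  · intro hprob
    -- the set of states that never hit B
    refine ⟨Finset.univ.filter fun j => hitProb q B j = 0 ∧ j ∉ B, ⟨?_, ?_⟩, ?_⟩
    · intro j hj
      exact (Finset.mem_filter.mp hj).2.2
    · intro j hj
      obtain ⟨hjprob, hjB⟩ := (Finset.mem_filter.mp hj).2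
      have hLe0 : ∀ n (k : S), hitProb q B k = 0 → hitLe q B n k = 0 := fun n k h =>
        le_antisymm (h ▸ hitLe_le_hitProb q B hp0 hp1 n k)
          (hitLe_nonneg q B hp0 n k)
      have hsum0 : ∀ n, ∑ k, q j k * hitLe q B n k = 0 := by
        intro n
        have := hLe0 (n + 1) j hjprob
        simpa [hitLe, hjB] using this
      have hterm0 : ∀ n k, q j k * hitLe q B n k = 0 := by
        intro n k
        exact (Finset.sum_eq_zero_iff_of_nonneg
          (fun k _ => mul_nonneg (hp0 j k) (hitLe_nonneg q B hp0 n k))).mp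
          (hsum0 n) k (Finset.mem_univ k)
      have key : ∀ k, k ∉ Finset.univ.filter (fun j => hitProb q B j = 0 ∧ j ∉ B) →
          q j k = 0 := by
        intro k hk
        simp only [Finset.mem_filter, Finset.mem_univ, true_and, not_and, not_not] at hk
        by_cases hkB : k ∈ B
        · have h0 := hterm0 0 k
          simp only [hitLe, if_pos hkB, mul_one] at h0
          exact h0
        · have hkprob : hitProb q B k ≠ 0 := fun h => hkB (hk h)
          obtain ⟨n, hn⟩ : ∃ n, hitLe q B n k ≠ 0 := by
            by_contra h
            push_neg at h
            exact hkprob (by simp only [hitProb, h, ciSup_const])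
          have := hterm0 n k
          rcases mul_eq_zero.mp this with h | h
          · exact h
          · exact absurd h hn
      calc ∑ k ∈ Finset.univ.filter (fun j => hitProb q B j = 0 ∧ j ∉ B), q j k
          = ∑ k, q j k :=
            Finset.sum_subset (Finset.subset_univ _) (fun k _ hk => key k hk)
        _ = 1 := hp1 j
    · simp [hprob, Finset.mem_compl.mp hiB]
end

section
/- With U_0 := B and the recursive sets U_n as above terminating at stage N_*, if F_* = Bᶜ \ ∪_{k=1}^{N_*} U_k is nonempty then for every i ∈ F_* the action set A_{U_{N_*-1}}(i) := {a ∈ A(i) : p(∪_{k=0}^{N_*-1} U_k | i, a) = 0} is nonempty, and the set of stationary policies g with F(g) = F_* is exactly {g : g(i) ∈ A_{U_{N_*-1}}(i) for all i ∈ F_*}. -/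
open Finset

variable {S A : Type*}

open scoped Classical

/-- `UnAux n = (U_n, U_0 ∪ ⋯ ∪ U_n)`, where `U_0 = B` and
`U_{n+1} = {i ∉ U_0 ∪ ⋯ ∪ U_n : p(U_0 ∪ ⋯ ∪ U_n | i, a) > 0 for every a ∈ A(i)}`. -/
noncomputable def UnAux [Fintype S] [DecidableEq S]
    (Acts : S → Finset A) (p : S → A → S → ℝ) (B : Finset S) :
    ℕ → Finset S × Finset S
  | 0 => (B, B)
  | n + 1 =>
      let c := (UnAux Acts p B n).2
      let u := Finset.univ.filter fun i =>
        i ∉ c ∧ ∀ a ∈ Acts i, 0 < ∑ j ∈ c, p i a j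
      (u, c ∪ u)

/-- The set `U_n` of the recursive construction. -/
noncomputable def Un [Fintype S] [DecidableEq S]
    (Acts : S → Finset A) (p : S → A → S → ℝ) (B : Finset S) (n : ℕ) : Finset S :=
  (UnAux Acts p B n).1

/-- The cumulative set `U_0 ∪ U_1 ∪ ⋯ ∪ U_n` (so `Bᶜ \ UnCum n = Bᶜ \ (U_1 ∪ ⋯ ∪ U_n)`). -/
noncomputable def UnCum [Fintype S] [DecidableEq S]
    (Acts : S → Finset A) (p : S → A → S → ℝ) (B : Finset S) (n : ℕ) : Finset S :=
  (UnAux Acts p B n).2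

lemma unCum_succ' [Fintype S] [DecidableEq S]
    (Acts : S → Finset A) (p : S → A → S → ℝ) (B : Finset S) (n : ℕ) :
    UnCum Acts p B (n+1) = UnCum Acts p B n ∪ Un Acts p B (n+1) := rfl

lemma mem_un_succ' [Fintype S] [DecidableEq S]
    (Acts : S → Finset A) (p : S → A → S → ℝ) (B : Finset S) (n : ℕ) (i : S) :
    i ∈ Un Acts p B (n+1) ↔
      i ∉ UnCum Acts p B n ∧ ∀ a ∈ Acts i, 0 < ∑ j ∈ UnCum Acts p B n, p i a j := by
  simp [Un, UnCum, UnAux]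

lemma B_subset_unCum' [Fintype S] [DecidableEq S]
    (Acts : S → Finset A) (p : S → A → S → ℝ) (B : Finset S) (n : ℕ) :
    B ⊆ UnCum Acts p B n := by
  induction n with
  | zero => exact Finset.Subset.refl B
  | succ n ih =>
      rw [unCum_succ']
      exact ih.trans Finset.subset_union_left

lemma sum_closed_zero' [Fintype S] [DecidableEq S]
    (Acts : S → Finset A) (p : S → A → S → ℝ) (B : Finset S)
    (hp0 : ∀ i, ∀ a ∈ Acts i, ∀ j, 0 ≤ p i a j)
    (hp1 : ∀ i, ∀ a ∈ Acts i, ∑ j, p i a j = 1)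
    (g : S → A) (hg : ∀ s, g s ∈ Acts s)
    (F : Finset S) (hF : IsBcClosed p B g F)
    (T : Finset S) (hT : ∀ j ∈ T, j ∉ F)
    (i : S) (hi : i ∈ F) :
    ∑ j ∈ T, p i (g i) j = 0 := by
  have h1 : ∑ j ∈ F, p i (g i) j = 1 := hF.2 i hi
  have hs := Finset.sum_sdiff (f := p i (g i)) (Finset.subset_univ F)
  have h3 := hp1 i (g i) (hg i)
  have hle : ∑ j ∈ T, p i (g i) j ≤ ∑ j ∈ Finset.univ \ F, p i (g i) j :=
    Finset.sum_le_sum_of_subset_of_nonneg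
      (fun j hj => Finset.mem_sdiff.mpr ⟨Finset.mem_univ j, hT j hj⟩)
      (fun j _ _ => hp0 i (g i) (hg i) j)
  have hge : 0 ≤ ∑ j ∈ T, p i (g i) j :=
    Finset.sum_nonneg fun j _ => hp0 i (g i) (hg i) j
  linarith

lemma closed_disjoint' [Fintype S] [DecidableEq S]
    (Acts : S → Finset A) (p : S → A → S → ℝ) (B : Finset S)
    (hp0 : ∀ i, ∀ a ∈ Acts i, ∀ j, 0 ≤ p i a j)
    (hp1 : ∀ i, ∀ a ∈ Acts i, ∑ j, p i a j = 1)
    (g : S → A) (hg : ∀ s, g s ∈ Acts s)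
    (F : Finset S) (hF : IsBcClosed p B g F) :
    ∀ n, ∀ i ∈ F, i ∉ UnCum Acts p B n := by
  intro n
  induction n with
  | zero => exact fun i hi => hF.1 i hi
  | succ n ih =>
      intro i hi hmem
      rw [unCum_succ', Finset.mem_union] at hmem
      rcases hmem with h | h
      · exact ih i hi h
      · rw [mem_un_succ'] at h
        have hpos := h.2 (g i) (hg i)
        have hz := sum_closed_zero' Acts p B hp0 hp1 g hg F hF
          (UnCum Acts p B n) (fun j hj hjF => ih j hjF hj) i hi
        linarith

theorem stmt9 [Fintype S] [DecidableEq S]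
    (Acts : S → Finset A) (hA : ∀ i, (Acts i).Nonempty)
    (p : S → A → S → ℝ) (B : Finset S)
    (hp0 : ∀ i, ∀ a ∈ Acts i, ∀ j, 0 ≤ p i a j)
    (hp1 : ∀ i, ∀ a ∈ Acts i, ∑ j, p i a j = 1)
    (N : ℕ) (hN1 : 1 ≤ N)
    -- `N` is the first stage at which the construction terminates:
    (hterm : Un Acts p B N = ∅ ∨ Bᶜ \ UnCum Acts p B N = ∅)
    (hmin : ∀ m, 1 ≤ m → m < N →
      Un Acts p B m ≠ ∅ ∧ Bᶜ \ UnCum Acts p B m ≠ ∅)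
    (hFne : (FStar Acts p B).Nonempty) :
    (∀ i ∈ FStar Acts p B,
      ((Acts i).filter fun a => ∑ j ∈ UnCum Acts p B (N - 1), p i a j = 0).Nonempty)
    ∧
    ∀ g : S → A, (∀ s, g s ∈ Acts s) →
      (Fabs p B g = FStar Acts p B ↔
        ∀ i ∈ FStar Acts p B, ∑ j ∈ UnCum Acts p B (N - 1), p i (g i) j = 0) := by
  classical
  obtain ⟨m, rfl⟩ : ∃ m, N = m + 1 := ⟨N - 1, (Nat.succ_pred_eq_of_pos hN1).symm⟩
  simp only [Nat.add_sub_cancel]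
  -- Step 1: the terminal stage has `Un (m+1) = ∅`.
  have hUN : Un Acts p B (m+1) = ∅ := by
    rcases hterm with h | h
    · exact h
    · exfalso
      obtain ⟨i, hi⟩ := hFne
      obtain ⟨g, hg, F, hF, hiF⟩ := hi
      have h1 : i ∉ UnCum Acts p B (m+1) :=
        closed_disjoint' Acts p B hp0 hp1 g hg F hF (m+1) i hiF
      have h2 : i ∉ B := hF.1 i hiF
      have : i ∈ Bᶜ \ UnCum Acts p B (m+1) := by
        rw [Finset.mem_sdiff, Finset.mem_compl]; exact ⟨h2, h1⟩
      rw [h] at this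
      exact absurd this (Finset.notMem_empty i)
  -- Step 2: every state outside `UnCum m` has a zeroing action.
  have hkey : ∀ i ∉ UnCum Acts p B m,
      ∃ a ∈ Acts i, ∑ j ∈ UnCum Acts p B m, p i a j = 0 := by
    intro i hi
    by_contra hcon
    push_neg at hcon
    have hmem : i ∈ Un Acts p B (m+1) := by
      rw [mem_un_succ']
      refine ⟨hi, fun a ha => ?_⟩
      have hge : 0 ≤ ∑ j ∈ UnCum Acts p B m, p i a j :=
        Finset.sum_nonneg fun j _ => hp0 i a ha j
      exact lt_of_le_of_ne hge (Ne.symm (hcon a ha))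
    rw [hUN] at hmem
    exact absurd hmem (Finset.notMem_empty i)
  -- A policy choosing zeroing actions where possible.
  have exg : ∀ s : S, ∃ a ∈ Acts s,
      (s ∉ UnCum Acts p B m → ∑ j ∈ UnCum Acts p B m, p s a j = 0) := by
    intro s
    by_cases hs : s ∈ UnCum Acts p B m
    · exact ⟨(hA s).choose, (hA s).choose_spec, fun h => absurd hs h⟩
    · obtain ⟨a, ha, haz⟩ := hkey s hs
      exact ⟨a, ha, fun _ => haz⟩
  choose g0 hg0 hg0z using exg
  -- Any valid policy zeroing on the complement has `(UnCum m)ᶜ` as closed set.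
  have hclosed : ∀ g : S → A, (∀ s, g s ∈ Acts s) →
      (∀ i ∉ UnCum Acts p B m, ∑ j ∈ UnCum Acts p B m, p i (g i) j = 0) →
      IsBcClosed p B g ((UnCum Acts p B m)ᶜ) := by
    intro g hg hz
    constructor
    · intro i hi hB
      exact (Finset.mem_compl.mp hi) (B_subset_unCum' Acts p B m hB)
    · intro i hi
      have hi' := Finset.mem_compl.mp hi
      have h0 := hz i hi'
      have hs := Finset.sum_sdiff (f := p i (g i))
        (Finset.subset_univ (UnCum Acts p B m))
      have h1 := hp1 i (g i) (hg i)
      rw [Finset.compl_eq_univ_sdiff]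
      linarith
  -- F_* equals the complement of `UnCum m`.
  have hFeq : FStar Acts p B = ↑((UnCum Acts p B m)ᶜ : Finset S) := by
    ext i
    constructor
    · rintro ⟨g, hg, F, hF, hiF⟩
      exact Finset.mem_coe.mpr (Finset.mem_compl.mpr
        (closed_disjoint' Acts p B hp0 hp1 g hg F hF m i hiF))
    · intro hi
      exact ⟨g0, hg0, (UnCum Acts p B m)ᶜ,
        hclosed g0 hg0 (fun s hs => hg0z s hs), Finset.mem_coe.mp hi⟩
  constructor
  · intro i hi
    rw [hFeq] at hi
    have hi' : i ∉ UnCum Acts p B m := Finset.mem_compl.mp (Finset.mem_coe.mp hi)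
    obtain ⟨a, ha, haz⟩ := hkey i hi'
    exact ⟨a, Finset.mem_filter.mpr ⟨ha, haz⟩⟩
  · intro g hg
    constructor
    · intro heq i hi
      rw [← heq] at hi
      obtain ⟨F, hF, hiF⟩ := hi
      exact sum_closed_zero' Acts p B hp0 hp1 g hg F hF
        (UnCum Acts p B m)
        (fun j hj hjF => closed_disjoint' Acts p B hp0 hp1 g hg F hF m j hjF hj)
        i hiF
    · intro hz
      apply Set.Subset.antisymm
      · rintro i ⟨F, hF, hiF⟩
        exact ⟨g, hg, F, hF, hiF⟩
      · intro i hi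
        refine ⟨(UnCum Acts p B m)ᶜ, hclosed g hg ?_, ?_⟩
        · intro s hs
          apply hz s
          rw [hFeq]
          exact Finset.mem_coe.mpr (Finset.mem_compl.mpr hs)
        · rw [hFeq] at hi
          exact Finset.mem_coe.mp hi
end

section
/- Let g be a stationary policy with F(g) = F_* and suppose G_* := Bᶜ \ F_* is nonempty. Then (q_i^g : i ∈ G_*) is the UNIQUE solution of the system x_i = p(B|i,g(i)) + Σ_{j∈G_*} p(j|i,g(i)) x_j with 0 ≤ x_i ≤ 1, for i ∈ G_*. -/
open Finset

variable {S A : Type*}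

open scoped Classical

/-- `GStar Acts p B = G_* = Bᶜ \ F_*`, as a finite set of states. -/
noncomputable def GStar [Fintype S] (Acts : S → Finset A) (p : S → A → S → ℝ)
    (B : Finset S) : Finset S :=
  Finset.univ.filter fun i => i ∉ B ∧ i ∉ FStar Acts p B

/-- Auxiliary iterates: `auxU q G n i` is the probability of staying in `G`
for `n` steps under kernel `q` (substochastic restriction to `G`). -/
noncomputable def auxU [Fintype S] [DecidableEq S] (q : S → S → ℝ) (G : Finset S) :
    ℕ → S → ℝ
  | 0, _ => 1
  | n + 1, i => ∑ j ∈ G, q i j * auxU q G n j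

theorem stmt11 [Fintype S] [DecidableEq S]
    (Acts : S → Finset A) (p : S → A → S → ℝ) (B : Finset S)
    (hp0 : ∀ i, ∀ a ∈ Acts i, ∀ j, 0 ≤ p i a j)
    (hp1 : ∀ i, ∀ a ∈ Acts i, ∑ j, p i a j = 1)
    (g : S → A) (hg : ∀ i, g i ∈ Acts i)
    (hFg : Fabs p B g = FStar Acts p B)
    (hG : (GStar Acts p B).Nonempty) :
    (∀ i ∈ GStar Acts p B,
      (hitProb (fun i j => p i (g i) j) B i
          = (∑ j ∈ B, p i (g i) j)
            + ∑ j ∈ GStar Acts p B,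
                p i (g i) j * hitProb (fun i j => p i (g i) j) B j)
        ∧ 0 ≤ hitProb (fun i j => p i (g i) j) B i
        ∧ hitProb (fun i j => p i (g i) j) B i ≤ 1)
    ∧
    ∀ x : S → ℝ,
      (∀ i ∈ GStar Acts p B,
        (x i = (∑ j ∈ B, p i (g i) j)
                 + ∑ j ∈ GStar Acts p B, p i (g i) j * x j)
          ∧ 0 ≤ x i ∧ x i ≤ 1) →
      ∀ i ∈ GStar Acts p B, x i = hitProb (fun i j => p i (g i) j) B i := by
  classical
  set q : S → S → ℝ := fun i j => p i (g i) j with hqdef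
  set G : Finset S := GStar Acts p B with hGdef
  have hq0 : ∀ i j, 0 ≤ q i j := fun i j => hp0 i (g i) (hg i) j
  have hq1 : ∀ i, ∑ j, q i j = 1 := fun i => hp1 i (g i) (hg i)
  have hGmem : ∀ i, i ∈ G ↔ (i ∉ B ∧ i ∉ FStar Acts p B) := by
    intro i; simp [hGdef, GStar]
  -- basic bounds for hitLe
  have hLe01 : ∀ n i, 0 ≤ hitLe q B n i ∧ hitLe q B n i ≤ 1 := by
    intro n
    induction n with
    | zero =>
        intro i; by_cases hi : i ∈ B <;> simp [hitLe, hi]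
    | succ n ih =>
        intro i; by_cases hi : i ∈ B
        · simp [hitLe, hi]
        · simp only [hitLe, hi, if_neg]
          constructor
          · exact Finset.sum_nonneg fun j _ => mul_nonneg (hq0 i j) (ih j).1
          · calc ∑ j, q i j * hitLe q B n j ≤ ∑ j, q i j := by
                  refine Finset.sum_le_sum fun j _ =>
                    mul_le_of_le_one_right (hq0 i j) (ih j).2
              _ = 1 := hq1 i
  -- monotonicity in n
  have hstep : ∀ n i, hitLe q B n i ≤ hitLe q B (n + 1) i := by
    intro n
    induction n with
    | zero =>
        intro i; by_cases hi : i ∈ B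
        · simp [hitLe, hi]
        · simp only [hitLe, hi, if_neg]
          exact Finset.sum_nonneg fun j _ => mul_nonneg (hq0 i j) (hLe01 0 j).1
    | succ n ih =>
        intro i; by_cases hi : i ∈ B
        · simp [hitLe, hi]
        · simp only [hitLe, hi, if_neg]
          exact Finset.sum_le_sum fun j _ =>
            mul_le_mul_of_nonneg_left (ih j) (hq0 i j)
  have hmono : ∀ i, Monotone fun n => hitLe q B n i := fun i =>
    monotone_nat_of_le_succ fun n => hstep n i
  have hbdd : ∀ i, BddAbove (Set.range fun n => hitLe q B n i) := by
    intro i; refine ⟨1, ?_⟩; rintro _ ⟨n, rfl⟩; exact (hLe01 n i).2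
  have htend : ∀ i,
      Filter.Tendsto (fun n => hitLe q B n i) Filter.atTop (nhds (hitProb q B i)) :=
    fun i => tendsto_atTop_ciSup (hmono i) (hbdd i)
  have hP0 : ∀ i, 0 ≤ hitProb q B i := fun i =>
    (hLe01 0 i).1.trans (le_ciSup (hbdd i) 0)
  have hP1 : ∀ i, hitProb q B i ≤ 1 := fun i => ciSup_le fun n => (hLe01 n i).2
  -- on B, hitLe = 1
  have hB1 : ∀ n, ∀ j ∈ B, hitLe q B n j = 1 := by
    intro n j hj; cases n <;> simp [hitLe, hj]
  -- in a closed set, hitLe = 0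
  have hclosed0 : ∀ F : Finset S, IsBcClosed p B g F →
      ∀ n, ∀ j ∈ F, hitLe q B n j = 0 := by
    intro F hF
    have hzero : ∀ i ∈ F, ∀ j, j ∉ F → q i j = 0 := by
      intro i hi j hj
      have hsd : ∑ k ∈ Finset.univ \ F, q i k + ∑ k ∈ F, q i k = ∑ k, q i k :=
        Finset.sum_sdiff (Finset.subset_univ F)
      have h0 : ∑ k ∈ Finset.univ \ F, q i k = 0 := by
        have := hF.2 i hi
        have h1 := hq1 i
        simp only [hqdef] at this h1 ⊢
        linarith [hsd]
      have := (Finset.sum_eq_zero_iff_of_nonneg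
        (fun k _ => hq0 i k)).mp h0 j (by simp [hj])
      exact this
    intro n
    induction n with
    | zero =>
        intro j hj; simp [hitLe, hF.1 j hj]
    | succ n ih =>
        intro j hj
        simp only [hitLe, hF.1 j hj, if_neg, not_false_iff]
        refine Finset.sum_eq_zero fun k _ => ?_
        by_cases hk : k ∈ F
        · rw [ih k hk, mul_zero]
        · rw [hzero j hj k hk, zero_mul]
  -- outside B and outside G, hitLe = 0
  have hF0 : ∀ j, j ∉ B → j ∉ G → ∀ n, hitLe q B n j = 0 := by
    intro j hjB hjG n
    have hjF : j ∈ FStar Acts p B := by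
      by_contra h
      exact hjG ((hGmem j).mpr ⟨hjB, h⟩)
    rw [← hFg] at hjF
    obtain ⟨F, hF, hjmem⟩ := hjF
    exact hclosed0 F hF n j hjmem
  have hGsub : G ⊆ Finset.univ \ B := by
    intro i hi
    simp only [Finset.mem_sdiff, Finset.mem_univ, true_and]
    exact ((hGmem i).mp hi).1
  -- one-step equation for hitLe on G
  have hEq : ∀ n, ∀ i ∈ G, hitLe q B (n + 1) i
      = (∑ j ∈ B, q i j) + ∑ j ∈ G, q i j * hitLe q B n j := by
    intro n i hi
    have hiB : i ∉ B := ((hGmem i).mp hi).1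
    have e1 : hitLe q B (n + 1) i = ∑ j, q i j * hitLe q B n j := by
      simp [hitLe, hiB]
    have e2 : ∑ j ∈ Finset.univ \ B, q i j * hitLe q B n j
        + ∑ j ∈ B, q i j * hitLe q B n j = ∑ j, q i j * hitLe q B n j :=
      Finset.sum_sdiff (Finset.subset_univ B)
    have e3 : ∑ j ∈ B, q i j * hitLe q B n j = ∑ j ∈ B, q i j :=
      Finset.sum_congr rfl fun j hj => by rw [hB1 n j hj, mul_one]
    have e4 : ∑ j ∈ (Finset.univ \ B) \ G, q i j * hitLe q B n j
        + ∑ j ∈ G, q i j * hitLe q B n j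
        = ∑ j ∈ Finset.univ \ B, q i j * hitLe q B n j :=
      Finset.sum_sdiff hGsub
    have e5 : ∑ j ∈ (Finset.univ \ B) \ G, q i j * hitLe q B n j = 0 := by
      refine Finset.sum_eq_zero fun j hj => ?_
      simp only [Finset.mem_sdiff, Finset.mem_univ, true_and] at hj
      rw [hF0 j hj.1 hj.2 n, mul_zero]
    rw [e1, ← e2, ← e4, e5, e3]; ring
  -- the fixed point equation for hitProb on G
  have hPeq : ∀ i ∈ G, hitProb q B i
      = (∑ j ∈ B, q i j) + ∑ j ∈ G, q i j * hitProb q B j := by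
    intro i hi
    have t1 : Filter.Tendsto
        (fun n => (∑ j ∈ B, q i j) + ∑ j ∈ G, q i j * hitLe q B n j)
        Filter.atTop
        (nhds ((∑ j ∈ B, q i j) + ∑ j ∈ G, q i j * hitProb q B j)) := by
      refine Filter.Tendsto.add tendsto_const_nhds ?_
      exact tendsto_finset_sum _ fun j _ => (htend j).const_mul _
    have t2 : Filter.Tendsto (fun n => hitLe q B (n + 1) i) Filter.atTop
        (nhds (hitProb q B i)) :=
      (htend i).comp (Filter.tendsto_add_atTop_nat 1)
    have t2' : Filter.Tendsto
        (fun n => (∑ j ∈ B, q i j) + ∑ j ∈ G, q i j * hitLe q B n j)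
        Filter.atTop (nhds (hitProb q B i)) :=
      t2.congr fun n => hEq n i hi
    exact tendsto_nhds_unique t2' t1
  refine ⟨fun i hi => ⟨hPeq i hi, hP0 i, hP1 i⟩, ?_⟩
  -- uniqueness
  intro x hx
  set y : S → ℝ := fun i => x i - hitProb q B i with hydef
  have hy : ∀ i ∈ G, y i = ∑ j ∈ G, q i j * y j := by
    intro i hi
    have hx' := (hx i hi).1
    have hp' := hPeq i hi
    have hsplit : ∑ j ∈ G, q i j * y j
        = ∑ j ∈ G, q i j * x j - ∑ j ∈ G, q i j * hitProb q B j := by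
      rw [← Finset.sum_sub_distrib]
      exact Finset.sum_congr rfl fun j _ => by simp [hydef, mul_sub]
    simp only [hydef]
    rw [hsplit]; linarith
  -- properties of auxU
  have hu0 : ∀ n i, 0 ≤ auxU q G n i := by
    intro n
    induction n with
    | zero => intro i; simp [auxU]
    | succ n ih =>
        intro i
        exact Finset.sum_nonneg fun j _ => mul_nonneg (hq0 i j) (ih j)
  have hqG1 : ∀ i, ∑ j ∈ G, q i j ≤ 1 := by
    intro i
    calc ∑ j ∈ G, q i j ≤ ∑ j, q i j :=
          Finset.sum_le_sum_of_subset_of_nonneg (Finset.subset_univ G)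
            (fun j _ _ => hq0 i j)
      _ = 1 := hq1 i
  have hu1 : ∀ n i, auxU q G n i ≤ 1 := by
    intro n
    induction n with
    | zero => intro i; simp [auxU]
    | succ n ih =>
        intro i
        calc (auxU q G (n + 1) i) = ∑ j ∈ G, q i j * auxU q G n j := rfl
          _ ≤ ∑ j ∈ G, q i j :=
              Finset.sum_le_sum fun j _ => mul_le_of_le_one_right (hq0 i j) (ih j)
          _ ≤ 1 := hqG1 i
  have huanti : ∀ n i, auxU q G (n + 1) i ≤ auxU q G n i := by
    intro n
    induction n with
    | zero =>
        intro i
        calc (auxU q G 1 i) = ∑ j ∈ G, q i j * auxU q G 0 j := rfl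
          _ = ∑ j ∈ G, q i j := by
              refine Finset.sum_congr rfl fun j _ => by simp [auxU]
          _ ≤ 1 := hqG1 i
          _ = auxU q G 0 i := by simp [auxU]
    | succ n ih =>
        intro i
        exact Finset.sum_le_sum fun j _ =>
          mul_le_mul_of_nonneg_left (ih j) (hq0 i j)
  -- the decreasing sets D n
  set D : ℕ → Finset S := fun n => G.filter (fun i => auxU q G n i = 1) with hDdef
  have hDsub : ∀ n, D (n + 1) ⊆ D n := by
    intro n i hi
    simp only [hDdef, Finset.mem_filter] at hi ⊢
    exact ⟨hi.1, le_antisymm (hu1 n i) (by rw [← hi.2]; exact huanti n i)⟩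
  have hDkey : ∀ n, D (n + 1) = D n → ¬(D n).Nonempty := by
    intro n hDeq ⟨i0, hi0⟩
    -- D n is a B^c-closed set of g
    have hclosed : IsBcClosed p B g (D n) := by
      constructor
      · intro i hi
        simp only [hDdef, Finset.mem_filter] at hi
        exact ((hGmem i).mp hi.1).1
      · intro i hi
        have hi' : i ∈ D (n + 1) := hDeq ▸ hi
        simp only [hDdef, Finset.mem_filter] at hi hi'
        have h1 : ∑ j ∈ G, q i j * auxU q G n j = 1 := hi'.2
        have hle : ∀ j ∈ G, q i j * auxU q G n j ≤ q i j := fun j _ =>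
          mul_le_of_le_one_right (hq0 i j) (hu1 n j)
        have hsum1 : ∑ j ∈ G, q i j = 1 := by
          refine le_antisymm (hqG1 i) ?_
          rw [← h1]; exact Finset.sum_le_sum hle
        have hterm : ∀ j ∈ G, q i j * auxU q G n j = q i j := by
          have := (Finset.sum_eq_sum_iff_of_le hle).mp (by rw [h1, hsum1])
          exact this
        have hout : ∀ j ∈ G, j ∉ D n → q i j = 0 := by
          intro j hjG hjD
          simp only [hDdef, Finset.mem_filter] at hjD
          have hne : auxU q G n j ≠ 1 := fun h => hjD ⟨hjG, h⟩
          have hlt : auxU q G n j < 1 := lt_of_le_of_ne (hu1 n j) hne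
          by_contra hq
          have hqpos : 0 < q i j := lt_of_le_of_ne (hq0 i j) (Ne.symm hq)
          have := hterm j hjG
          nlinarith
        have : ∑ j ∈ D n, q i j = ∑ j ∈ G, q i j := by
          refine Finset.sum_subset (Finset.filter_subset _ _) ?_
          intro j hjG hjD
          exact hout j hjG hjD
        simp only [hqdef] at this hsum1
        rw [this, hsum1]
    -- contradiction: i0 ∈ G but i0 ∈ FStar
    have hi0G : i0 ∈ G := by
      simp only [hDdef, Finset.mem_filter] at hi0; exact hi0.1
    have : i0 ∈ FStar Acts p B := ⟨g, hg, ⟨D n, hclosed, hi0⟩⟩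
    exact ((hGmem i0).mp hi0G).2 this
  have hcard : ∀ n, (D n).Nonempty → (D n).card + n ≤ G.card := by
    intro n
    induction n with
    | zero =>
        intro _
        simpa using Finset.card_le_card (Finset.filter_subset _ G)
    | succ n ih =>
        intro hne
        have hne' : (D n).Nonempty := hne.mono (hDsub n)
        have hssub : D (n + 1) ⊂ D n := by
          refine (Finset.ssubset_iff_subset_ne).mpr ⟨hDsub n, ?_⟩
          intro h
          exact hDkey n h hne'
        have hc : (D (n + 1)).card < (D n).card := Finset.card_lt_card hssub
        have := ih hne'
        omega
  have hDempty : ∀ i ∈ G, auxU q G G.card i < 1 := by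
    intro i hi
    refine lt_of_le_of_ne (hu1 _ i) fun h => ?_
    have hmem : i ∈ D G.card := by
      simp only [hDdef, Finset.mem_filter]; exact ⟨hi, h⟩
    have hne : (D G.card).Nonempty := ⟨i, hmem⟩
    have := hcard G.card hne
    have : (D G.card).card = 0 := by omega
    rw [Finset.card_eq_zero] at this
    rw [this] at hmem
    exact absurd hmem (Finset.notMem_empty i)
  -- maximize |y|
  obtain ⟨i0, hi0G, hi0max⟩ := G.exists_max_image (fun i => |y i|) hG
  have hbound : ∀ n, ∀ i ∈ G, |y i| ≤ |y i0| * auxU q G n i := by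
    intro n
    induction n with
    | zero =>
        intro i hi; simpa [auxU] using hi0max i hi
    | succ n ih =>
        intro i hi
        calc |y i| = |∑ j ∈ G, q i j * y j| := by rw [hy i hi]
          _ ≤ ∑ j ∈ G, |q i j * y j| := Finset.abs_sum_le_sum_abs _ _
          _ = ∑ j ∈ G, q i j * |y j| := by
              refine Finset.sum_congr rfl fun j _ => ?_
              rw [abs_mul, abs_of_nonneg (hq0 i j)]
          _ ≤ ∑ j ∈ G, q i j * (|y i0| * auxU q G n j) :=
              Finset.sum_le_sum fun j hj =>
                mul_le_mul_of_nonneg_left (ih j hj) (hq0 i j)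
          _ = |y i0| * auxU q G (n + 1) i := by
              show _ = |y i0| * ∑ j ∈ G, q i j * auxU q G n j
              rw [Finset.mul_sum]
              exact Finset.sum_congr rfl fun j _ => by ring
  have hM : |y i0| ≤ 0 := by
    have h1 := hbound G.card i0 hi0G
    have h2 := hDempty i0 hi0G
    nlinarith [abs_nonneg (y i0)]
  intro i hi
  have : |y i| ≤ 0 := (hi0max i hi).trans hM
  have hyi : y i = 0 := abs_eq_zero.mp (le_antisymm this (abs_nonneg _))
  have : x i - hitProb q B i = 0 := hyi
  linarith
end

section
/- Let g be a stationary policy with F(g) = F_* and G_* = Bᶜ \ F_* ≠ ∅, and let P be the substochastic matrix (p(j|i,g(i)))_{i,j∈G_*}. Then there exists a finite n such that every row sum of Pⁿ is strictly less than 1; consequently, I − Pⁿ (and hence I − P) is invertible. -/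
open Finset

variable {S A : Type*}

open scoped Classical

lemma aux_det_unit [Fintype S] [DecidableEq S] (G : Finset S) (Q : Matrix S S ℝ)
    (hnn : ∀ i j, 0 ≤ Q i j)
    (hz : ∀ i j, j ∉ G → Q i j = 0)
    (hrow : ∀ i, ∑ j ∈ G, Q i j < 1) :
    IsUnit (1 - Q) := by
  rw [Matrix.isUnit_iff_isUnit_det, isUnit_iff_ne_zero]
  intro hdet
  obtain ⟨v, hv0, hv⟩ := (Matrix.exists_mulVec_eq_zero_iff).mpr hdet
  have hvQ : ∀ i, v i = ∑ j, Q i j * v j := by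
    intro i
    have := congrFun hv i
    rw [Matrix.sub_mulVec] at this
    have h2 : (1 : Matrix S S ℝ).mulVec v i - Q.mulVec v i = 0 := by
      simpa [Pi.sub_apply] using this
    rw [Matrix.one_mulVec, sub_eq_zero] at h2
    simpa [Matrix.mulVec, dotProduct] using h2
  obtain ⟨i₁, hi₁⟩ : ∃ i, v i ≠ 0 := by
    by_contra h
    push_neg at h
    exact hv0 (funext h)
  obtain ⟨i₀, -, hmax⟩ := Finset.exists_max_image Finset.univ (fun i => |v i|)
    ⟨i₁, Finset.mem_univ i₁⟩
  have hm : 0 < |v i₀| := lt_of_lt_of_le (abs_pos.mpr hi₁) (hmax i₁ (Finset.mem_univ i₁))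
  have hlt : |v i₀| < |v i₀| := by
    calc |v i₀| = |∑ j ∈ G, Q i₀ j * v j| := by
          rw [hvQ i₀]
          congr 1
          refine (Finset.sum_subset G.subset_univ ?_).symm
          intro x _ hx
          rw [hz i₀ x hx, zero_mul]
      _ ≤ ∑ j ∈ G, |Q i₀ j * v j| := Finset.abs_sum_le_sum_abs _ _
      _ ≤ ∑ j ∈ G, Q i₀ j * |v i₀| := by
          refine Finset.sum_le_sum fun j _ => ?_
          rw [abs_mul, abs_of_nonneg (hnn i₀ j)]
          exact mul_le_mul_of_nonneg_left (hmax j (Finset.mem_univ j)) (hnn i₀ j)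
      _ = (∑ j ∈ G, Q i₀ j) * |v i₀| := by rw [Finset.sum_mul]
      _ < 1 * |v i₀| := by exact mul_lt_mul_of_pos_right (hrow i₀) hm
      _ = |v i₀| := one_mul _
  exact absurd hlt (lt_irrefl _)

theorem stmt12 [Fintype S] [DecidableEq S]
    (Acts : S → Finset A) (p : S → A → S → ℝ) (B : Finset S)
    (hp0 : ∀ i, ∀ a ∈ Acts i, ∀ j, 0 ≤ p i a j)
    (hp1 : ∀ i, ∀ a ∈ Acts i, ∑ j, p i a j = 1)
    (g : S → A) (hg : ∀ i, g i ∈ Acts i)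
    (hFg : Fabs p B g = FStar Acts p B)
    (hG : (GStar Acts p B).Nonempty)
    -- `P` is the substochastic matrix `(p(j|i,g(i)))_{i,j ∈ G_*}`, extended by `0`
    -- outside `G_* × G_*`:
    (P : Matrix S S ℝ)
    (hP : ∀ i j, P i j =
      if i ∈ GStar Acts p B ∧ j ∈ GStar Acts p B then p i (g i) j else 0) :
    ∃ n : ℕ, 0 < n ∧
      (∀ i ∈ GStar Acts p B, ∑ j ∈ GStar Acts p B, (P ^ n) i j < 1) ∧
      IsUnit (1 - P ^ n) ∧ IsUnit (1 - P) := by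
  classical
  set G := GStar Acts p B with hGdef
  have hGmem : ∀ i ∈ G, i ∉ B ∧ i ∉ FStar Acts p B := by
    intro i hi
    simp only [hGdef, GStar, Finset.mem_filter] at hi
    exact hi.2
  have hPnn : ∀ i j, 0 ≤ P i j := by
    intro i j
    rw [hP]
    split
    · exact hp0 i (g i) (hg i) j
    · exact le_refl 0
  have hPzj : ∀ i j, j ∉ G → P i j = 0 := by
    intro i j hj
    rw [hP, if_neg (by tauto)]
  have hPzi : ∀ i j, i ∉ G → P i j = 0 := by
    intro i j hi
    rw [hP, if_neg (by tauto)]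
  have hPval : ∀ i ∈ G, ∀ j ∈ G, P i j = p i (g i) j := by
    intro i hi j hj
    rw [hP, if_pos ⟨hi, hj⟩]
  have hProw : ∀ i ∈ G, ∑ j ∈ G, P i j ≤ 1 := by
    intro i hi
    have he : ∑ j ∈ G, P i j = ∑ j ∈ G, p i (g i) j :=
      Finset.sum_congr rfl fun j hj => hPval i hi j hj
    rw [he]
    calc ∑ j ∈ G, p i (g i) j ≤ ∑ j, p i (g i) j :=
          Finset.sum_le_sum_of_subset_of_nonneg G.subset_univ
            (fun j _ _ => hp0 i (g i) (hg i) j)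
      _ = 1 := hp1 i (g i) (hg i)
  -- powers
  have hQnn : ∀ n i j, 0 ≤ (P ^ n) i j := by
    intro n
    induction n with
    | zero =>
        intro i j
        simp [Matrix.one_apply]
        split <;> norm_num
    | succ n ih =>
        intro i j
        rw [pow_succ, Matrix.mul_apply]
        exact Finset.sum_nonneg fun k _ => mul_nonneg (ih i k) (hPnn k j)
  have hQzj : ∀ n, 0 < n → ∀ i j, j ∉ G → (P ^ n) i j = 0 := by
    intro n hn i j hj
    obtain ⟨m, rfl⟩ := Nat.exists_eq_succ_of_ne_zero hn.ne'
    rw [pow_succ, Matrix.mul_apply]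
    exact Finset.sum_eq_zero fun k _ => by rw [hPzj k j hj, mul_zero]
  have hQzi : ∀ n, 0 < n → ∀ i j, i ∉ G → (P ^ n) i j = 0 := by
    intro n hn i j hi
    obtain ⟨m, rfl⟩ := Nat.exists_eq_succ_of_ne_zero hn.ne'
    rw [pow_succ', Matrix.mul_apply]
    exact Finset.sum_eq_zero fun k _ => by rw [hPzi i k hi, zero_mul]
  -- row sums
  set r : ℕ → S → ℝ := fun n i => ∑ j ∈ G, (P ^ n) i j with hrdef
  have hr0 : ∀ i, r 0 i = if i ∈ G then 1 else 0 := by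
    intro i
    simp only [hrdef, pow_zero, Matrix.one_apply]
    rw [Finset.sum_ite_eq]
  have hrsucc : ∀ n i, r (n + 1) i = ∑ k ∈ G, P i k * r n k := by
    intro n i
    simp only [hrdef]
    have h1 : ∀ j, (P ^ (n + 1)) i j = ∑ k, P i k * (P ^ n) k j := by
      intro j
      rw [pow_succ', Matrix.mul_apply]
    calc ∑ j ∈ G, (P ^ (n + 1)) i j = ∑ j ∈ G, ∑ k, P i k * (P ^ n) k j := by
          exact Finset.sum_congr rfl fun j _ => h1 j
      _ = ∑ k, ∑ j ∈ G, P i k * (P ^ n) k j := Finset.sum_comm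
      _ = ∑ k, P i k * ∑ j ∈ G, (P ^ n) k j := by
          exact Finset.sum_congr rfl fun k _ => (Finset.mul_sum _ _ _).symm
      _ = ∑ k ∈ G, P i k * ∑ j ∈ G, (P ^ n) k j := by
          refine (Finset.sum_subset G.subset_univ ?_).symm
          intro k _ hk
          rw [hPzj i k hk, zero_mul]
  have hrnn : ∀ n i, 0 ≤ r n i := fun n i =>
    Finset.sum_nonneg fun j _ => hQnn n i j
  have hrle1 : ∀ n i, r n i ≤ 1 := by
    intro n
    induction n with
    | zero =>
        intro i
        rw [hr0]
        split <;> norm_num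
    | succ n ih =>
        intro i
        rw [hrsucc]
        by_cases hi : i ∈ G
        · calc ∑ k ∈ G, P i k * r n k ≤ ∑ k ∈ G, P i k * 1 :=
                Finset.sum_le_sum fun k _ =>
                  mul_le_mul_of_nonneg_left (ih k) (hPnn i k)
            _ = ∑ k ∈ G, P i k := by simp
            _ ≤ 1 := hProw i hi
        · calc ∑ k ∈ G, P i k * r n k = 0 :=
                Finset.sum_eq_zero fun k _ => by rw [hPzi i k hi, zero_mul]
            _ ≤ 1 := by norm_num
  have hrmono : ∀ n i, r (n + 1) i ≤ r n i := by
    intro n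
    induction n with
    | zero =>
        intro i
        rw [hr0]
        by_cases hi : i ∈ G
        · rw [if_pos hi]; exact hrle1 1 i
        · rw [if_neg hi, hrsucc]
          exact le_of_eq (Finset.sum_eq_zero fun k _ => by rw [hPzi i k hi, zero_mul])
    | succ n ih =>
        intro i
        rw [hrsucc, hrsucc]
        exact Finset.sum_le_sum fun k _ =>
          mul_le_mul_of_nonneg_left (ih k) (hPnn i k)
  -- the sets H n
  set H : ℕ → Finset S := fun n => G.filter (fun i => r n i = 1) with hHdef
  have hHsubG : ∀ n, H n ⊆ G := fun n => Finset.filter_subset _ _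
  have hHsub : ∀ n, H (n + 1) ⊆ H n := by
    intro n i hi
    simp only [hHdef, Finset.mem_filter] at hi ⊢
    exact ⟨hi.1, le_antisymm (hrle1 n i) (hi.2 ▸ hrmono n i)⟩
  have hHkey : ∀ n, (H (n + 1)).Nonempty → H (n + 1) ⊂ H n := by
    intro n hne
    rw [Finset.ssubset_iff_subset_ne]
    refine ⟨hHsub n, ?_⟩
    intro heq
    -- H n is a Bᶜ-closed set, contradiction
    have hclosed : IsBcClosed p B g (H n) := by
      constructor
      · intro i hi
        exact (hGmem i (hHsubG n hi)).1
      · intro i hi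
        have hi1 : i ∈ H (n + 1) := heq ▸ hi
        have hiG : i ∈ G := hHsubG n hi
        have hri : r (n + 1) i = 1 := by
          simp only [hHdef, Finset.mem_filter] at hi1
          exact hi1.2
        have hsplit : ∑ k ∈ G, P i k * r n k =
            (∑ k ∈ H n, P i k * r n k) +
            ∑ k ∈ G.filter (fun k => ¬ r n k = 1), P i k * r n k := by
          simp only [hHdef]
          exact (Finset.sum_filter_add_sum_filter_not G _ _).symm
        -- total row sum ≤ 1 and the "=1" part already accounts
        have hHval : ∑ k ∈ H n, P i k * r n k = ∑ k ∈ H n, P i k := by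
          refine Finset.sum_congr rfl fun k hk => ?_
          simp only [hHdef, Finset.mem_filter] at hk
          rw [hk.2, mul_one]
        have hrow1 : ∑ k ∈ G, P i k ≤ 1 := hProw i hiG
        have hsplit2 : ∑ k ∈ G, P i k =
            (∑ k ∈ H n, P i k) + ∑ k ∈ G.filter (fun k => ¬ r n k = 1), P i k := by
          simp only [hHdef]
          exact (Finset.sum_filter_add_sum_filter_not G _ _).symm
        have hcle : ∑ k ∈ G.filter (fun k => ¬ r n k = 1), P i k * r n k ≤
            ∑ k ∈ G.filter (fun k => ¬ r n k = 1), P i k := by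
          refine Finset.sum_le_sum fun k hk => ?_
          calc P i k * r n k ≤ P i k * 1 :=
                mul_le_mul_of_nonneg_left (hrle1 n k)
                  (hPnn i k)
            _ = P i k := mul_one _
        have h1 : (1 : ℝ) = ∑ k ∈ G, P i k * r n k := by
          rw [← hri, hrsucc]
        have hceq : ∑ k ∈ G.filter (fun k => ¬ r n k = 1), P i k * r n k =
            ∑ k ∈ G.filter (fun k => ¬ r n k = 1), P i k := by
          have := hsplit ▸ h1
          have h2 := hsplit2 ▸ hrow1
          linarith [hHval ▸ this]
        -- each term in the complement is zero
        have hzero : ∀ k ∈ G.filter (fun k => ¬ r n k = 1), P i k = 0 := by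
          have hterm : ∀ k ∈ G.filter (fun k => ¬ r n k = 1),
              P i k - P i k * r n k = 0 := by
            have hsum0 : ∑ k ∈ G.filter (fun k => ¬ r n k = 1),
                (P i k - P i k * r n k) = 0 := by
              rw [Finset.sum_sub_distrib, hceq, sub_self]
            intro k hk
            refine (Finset.sum_eq_zero_iff_of_nonneg ?_).mp hsum0 k hk
            intro k' hk'
            have : P i k' * r n k' ≤ P i k' := by
              calc P i k' * r n k' ≤ P i k' * 1 :=
                    mul_le_mul_of_nonneg_left (hrle1 n k') (hPnn i k')
                _ = P i k' := mul_one _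
            linarith
          intro k hk
          have hk2 := Finset.mem_filter.mp hk
          have hlt : r n k < 1 := lt_of_le_of_ne (hrle1 n k) hk2.2
          have := hterm k hk
          have hfac : P i k * (1 - r n k) = 0 := by ring_nf; linarith [this]
          rcases mul_eq_zero.mp hfac with h | h
          · exact h
          · exact absurd h (by linarith)
        have hco : ∑ k ∈ G.filter (fun k => ¬ r n k = 1), P i k = 0 :=
          Finset.sum_eq_zero hzero
        have hHone : ∑ k ∈ H n, P i k = 1 := by
          have := hsplit ▸ h1
          rw [hHval, hceq, hco, add_zero] at this
          exact this.symm
        calc ∑ j ∈ H n, p i (g i) j = ∑ j ∈ H n, P i j := by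
              refine Finset.sum_congr rfl fun j hj => (hPval i hiG j (hHsubG n hj)).symm
          _ = 1 := hHone
    -- contradiction: elements of H n would lie in F_*
    obtain ⟨i, hi⟩ := hne
    have hiHn : i ∈ H n := hHsub n hi
    have hiG : i ∈ G := hHsubG n hiHn
    have hiF : i ∈ FStar Acts p B := by
      rw [← hFg]
      exact ⟨H n, hclosed, hiHn⟩
    exact (hGmem i hiG).2 hiF
  -- cardinality descent
  have hcard : ∀ n, (H n).Nonempty → (H n).card + n ≤ G.card := by
    intro n
    induction n with
    | zero =>
        intro _
        simpa using Finset.card_le_card (hHsubG 0)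
    | succ n ih =>
        intro hne
        have hss := hHkey n hne
        have hlt := Finset.card_lt_card hss
        have hne' : (H n).Nonempty := hne.mono hss.subset
        have := ih hne'
        omega
  set N := G.card with hNdef
  have hN : 0 < N := Finset.card_pos.mpr hG
  have hHN : H N = ∅ := by
    by_contra h
    have hne := Finset.nonempty_iff_ne_empty.mpr h
    have := hcard N hne
    have := Finset.card_pos.mpr hne
    omega
  have hmain : ∀ i ∈ G, r N i < 1 := by
    intro i hi
    refine lt_of_le_of_ne (hrle1 N i) ?_
    intro heq
    have : i ∈ H N := Finset.mem_filter.mpr ⟨hi, heq⟩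
    rw [hHN] at this
    exact absurd this (Finset.notMem_empty i)
  have hrowN : ∀ i, ∑ j ∈ G, (P ^ N) i j < 1 := by
    intro i
    by_cases hi : i ∈ G
    · exact hmain i hi
    · have : ∑ j ∈ G, (P ^ N) i j = 0 :=
        Finset.sum_eq_zero fun j _ => hQzi N hN i j hi
      rw [this]; norm_num
  have hunitN : IsUnit (1 - P ^ N) :=
    aux_det_unit G (P ^ N) (hQnn N) (fun i j hj => hQzj N hN i j hj) hrowN
  have hunit1 : IsUnit (1 - P) := by
    have hgeo : (∑ i ∈ Finset.range N, P ^ i) * (1 - P) = 1 - P ^ N := by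
      have := geom_sum_mul P N
      rw [← neg_sub P 1, mul_neg, this, neg_sub]
    rw [Matrix.isUnit_iff_isUnit_det, isUnit_iff_ne_zero]
    intro hdet
    have hdetN : (1 - P ^ N).det ≠ 0 :=
      isUnit_iff_ne_zero.mp ((Matrix.isUnit_iff_isUnit_det _).mp hunitN)
    apply hdetN
    rw [← hgeo, Matrix.det_mul, hdet, mul_zero]
  exact ⟨N, hN, hmain, hunitN, hunit1⟩
end

section
/- Policy improvement step: let g be a stationary policy with F(g) = F_*, and define g̃ by g̃(i) := argmin_{a ∈ A_g(i)} [p(B|i,a) + Σ_{j∈G_*} p(j|i,a) q_j^g] whenever A_g(i) := {a ∈ A*(i) : q_i^g > p(B|i,a) + Σ_{j∈G_*} p(j|i,a) q_j^g} is nonempty, and g̃(i) := g(i) otherwise. Then q_i^{g̃} ≤ q_i^g for all i ∈ Bᶜ, and if g̃ ≠ g then q_i^{g̃} < q_i^g for at least one i ∈ Bᶜ. -/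
open Finset

variable {S A : Type*}

open scoped Classical

/-- The restricted admissible action sets `A*(i)`: all of `A(i)` off `F_*`, and on `F_*`
only the actions that keep `F_*` closed (`p(F_*|i,a) = 1`). -/
noncomputable def AStar [Fintype S] (Acts : S → Finset A) (p : S → A → S → ℝ)
    (B : Finset S) (i : S) : Finset A :=
  if i ∈ FStar Acts p B then
    (Acts i).filter fun a =>
      ∑ j ∈ Finset.univ.filter (· ∈ FStar Acts p B), p i a j = 1
  else Acts i

/-- The one-step value of action `a` at state `i` against the failure probabilities of `g`. -/
noncomputable def oneStep [Fintype S] [DecidableEq S]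
    (Acts : S → Finset A) (p : S → A → S → ℝ) (B : Finset S) (g : S → A)
    (i : S) (a : A) : ℝ :=
  (∑ j ∈ B, p i a j)
    + ∑ j ∈ GStar Acts p B, p i a j * hitProb (fun i j => p i (g i) j) B j

/-- `A_g(i)`: the strictly improving actions at `i`. -/
noncomputable def ImpActs [Fintype S] [DecidableEq S]
    (Acts : S → Finset A) (p : S → A → S → ℝ) (B : Finset S) (g : S → A)
    (i : S) : Finset A :=
  (AStar Acts p B i).filter fun a =>
    oneStep Acts p B g i a < hitProb (fun i j => p i (g i) j) B i

section aux

variable [Fintype S] [DecidableEq S] {P : S → S → ℝ} {B : Finset S}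

lemma hitLe_nonneg_s15 (hP0 : ∀ i j, 0 ≤ P i j) : ∀ n i, 0 ≤ hitLe P B n i
  | 0, i => by simp only [hitLe]; split <;> norm_num
  | n + 1, i => by
      simp only [hitLe]; split
      · norm_num
      · exact Finset.sum_nonneg fun j _ => mul_nonneg (hP0 i j) (hitLe_nonneg_s15 hP0 n j)

lemma hitLe_le_one_s15 (hP0 : ∀ i j, 0 ≤ P i j) (hP1 : ∀ i, ∑ j, P i j = 1) :
    ∀ n i, hitLe P B n i ≤ 1
  | 0, i => by simp only [hitLe]; split <;> norm_num
  | n + 1, i => by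
      simp only [hitLe]; split
      · norm_num
      · calc ∑ j, P i j * hitLe P B n j ≤ ∑ j, P i j * 1 :=
              Finset.sum_le_sum fun j _ =>
                mul_le_mul_of_nonneg_left (hitLe_le_one_s15 hP0 hP1 n j) (hP0 i j)
          _ = 1 := by simp [hP1 i]

lemma hitLe_mono (hP0 : ∀ i j, 0 ≤ P i j) (i : S) :
    Monotone fun n => hitLe P B n i := by
  have key : ∀ n i, hitLe P B n i ≤ hitLe P B (n + 1) i := by
    intro n
    induction n with
    | zero =>
        intro i
        simp only [hitLe]; split
        · norm_num
        · exact Finset.sum_nonneg fun j _ => mul_nonneg (hP0 i j) (hitLe_nonneg_s15 hP0 0 j)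
    | succ n ih =>
        intro i
        simp only [hitLe]; split
        · norm_num
        · exact Finset.sum_le_sum fun j _ =>
            mul_le_mul_of_nonneg_left (ih j) (hP0 i j)
  exact monotone_nat_of_le_succ fun n => key n i

lemma hitLe_bdd (hP0 : ∀ i j, 0 ≤ P i j) (hP1 : ∀ i, ∑ j, P i j = 1) (i : S) :
    BddAbove (Set.range fun n => hitLe P B n i) :=
  ⟨1, by rintro x ⟨n, rfl⟩; exact hitLe_le_one_s15 hP0 hP1 n i⟩

lemma hitLe_le_hitProb_s15 (hP0 : ∀ i j, 0 ≤ P i j) (hP1 : ∀ i, ∑ j, P i j = 1)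
    (n : ℕ) (i : S) : hitLe P B n i ≤ hitProb P B i :=
  le_ciSup (hitLe_bdd hP0 hP1 i) n

lemma hitProb_nonneg (hP0 : ∀ i j, 0 ≤ P i j) (hP1 : ∀ i, ∑ j, P i j = 1) (i : S) :
    0 ≤ hitProb P B i :=
  le_trans (hitLe_nonneg_s15 hP0 0 i) (hitLe_le_hitProb_s15 hP0 hP1 0 i)

lemma hitProb_le_one (hP0 : ∀ i j, 0 ≤ P i j) (hP1 : ∀ i, ∑ j, P i j = 1) (i : S) :
    hitProb P B i ≤ 1 :=
  ciSup_le fun n => hitLe_le_one_s15 hP0 hP1 n i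

lemma hitProb_of_mem {i : S} (hi : i ∈ B) : hitProb P B i = 1 := by
  have : ∀ n, hitLe P B n i = 1 := by
    intro n; cases n <;> simp [hitLe, hi]
  simp only [hitProb, this, ciSup_const]

lemma step_le_hitProb (hP0 : ∀ i j, 0 ≤ P i j) (hP1 : ∀ i, ∑ j, P i j = 1) (i : S) :
    ∑ j, P i j * hitProb P B j ≤ hitProb P B i := by
  by_cases hi : i ∈ B
  · rw [hitProb_of_mem hi]
    calc ∑ j, P i j * hitProb P B j ≤ ∑ j, P i j * 1 :=
          Finset.sum_le_sum fun j _ =>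
            mul_le_mul_of_nonneg_left (hitProb_le_one hP0 hP1 j) (hP0 i j)
      _ = 1 := by simp [hP1 i]
  · have htend : Filter.Tendsto (fun n => ∑ j, P i j * hitLe P B n j)
        Filter.atTop (nhds (∑ j, P i j * hitProb P B j)) := by
      apply tendsto_finset_sum
      intro j _
      exact Filter.Tendsto.const_mul _
        (tendsto_atTop_ciSup (hitLe_mono hP0 j) (hitLe_bdd hP0 hP1 j))
    apply le_of_tendsto htend
    filter_upwards with n
    have : ∑ j, P i j * hitLe P B n j = hitLe P B (n + 1) i := by
      simp only [hitLe]; rw [if_neg hi]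
    rw [this]
    exact hitLe_le_hitProb_s15 hP0 hP1 (n + 1) i

lemma hitProb_eq_zero_of_closed (hP0 : ∀ i j, 0 ≤ P i j) (hP1 : ∀ i, ∑ j, P i j = 1)
    {F : Finset S} (hFB : ∀ i ∈ F, i ∉ B) (hFc : ∀ i ∈ F, ∑ j ∈ F, P i j = 1)
    {i : S} (hi : i ∈ F) : hitProb P B i = 0 := by
  have hout : ∀ i ∈ F, ∀ j ∉ F, P i j = 0 := by
    intro i hi j hj
    have hsplit : ∑ j ∈ F, P i j + ∑ j ∈ Fᶜ, P i j = 1 := by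
      rw [Finset.sum_add_sum_compl]; exact hP1 i
    have h0 : ∑ j ∈ Fᶜ, P i j = 0 := by
      rw [hFc i hi] at hsplit; linarith
    have := (Finset.sum_eq_zero_iff_of_nonneg (fun j _ => hP0 i j)).mp h0
    exact this j (Finset.mem_compl.mpr hj)
  have hz : ∀ n, ∀ i ∈ F, hitLe P B n i = 0 := by
    intro n
    induction n with
    | zero => intro i hi; simp [hitLe, hFB i hi]
    | succ n ih =>
        intro i hi
        simp only [hitLe]
        rw [if_neg (hFB i hi)]
        apply Finset.sum_eq_zero
        intro j _
        by_cases hj : j ∈ F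
        · rw [ih j hj, mul_zero]
        · rw [hout i hi j hj, zero_mul]
  have : ∀ n, hitLe P B n i = 0 := fun n => hz n i hi
  simp only [hitProb, this, ciSup_const]

end aux
theorem stmt15 [Fintype S] [DecidableEq S]
    (Acts : S → Finset A) (p : S → A → S → ℝ) (B : Finset S)
    (hp0 : ∀ i, ∀ a ∈ Acts i, ∀ j, 0 ≤ p i a j)
    (hp1 : ∀ i, ∀ a ∈ Acts i, ∑ j, p i a j = 1)
    (hF : (FStar Acts p B).Nonempty) (hG : (GStar Acts p B).Nonempty)
    (g : S → A) (hg : ∀ i, g i ∈ Acts i)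
    (hFg : Fabs p B g = FStar Acts p B)
    (gt : S → A)
    (hgtB : ∀ i ∈ B, gt i = g i)
    (hgt1 : ∀ i ∈ Bᶜ, ImpActs Acts p B g i = ∅ → gt i = g i)
    (hgt2 : ∀ i ∈ Bᶜ, ImpActs Acts p B g i ≠ ∅ →
      gt i ∈ ImpActs Acts p B g i ∧
        ∀ a ∈ ImpActs Acts p B g i,
          oneStep Acts p B g i (gt i) ≤ oneStep Acts p B g i a) :
    (∀ i ∈ Bᶜ,
      hitProb (fun i j => p i (gt i) j) B i
        ≤ hitProb (fun i j => p i (g i) j) B i)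
    ∧
    (gt ≠ g → ∃ i ∈ Bᶜ,
      hitProb (fun i j => p i (gt i) j) B i
        < hitProb (fun i j => p i (g i) j) B i) := by
  have hpg0 : ∀ i j, 0 ≤ p i (g i) j := fun i j => hp0 i (g i) (hg i) j
  have hpg1 : ∀ i, ∑ j, p i (g i) j = 1 := fun i => hp1 i (g i) (hg i)
  set q : S → ℝ := hitProb (fun i j => p i (g i) j) B with hq
  have hgA : ∀ i, gt i ∈ Acts i := by
    intro i
    by_cases hiB : i ∈ B
    · rw [hgtB i hiB]; exact hg i
    · by_cases hI : ImpActs Acts p B g i = ∅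
      · rw [hgt1 i (Finset.mem_compl.mpr hiB) hI]; exact hg i
      · have h := (hgt2 i (Finset.mem_compl.mpr hiB) hI).1
        rw [ImpActs, Finset.mem_filter] at h
        have h2 := h.1
        rw [AStar] at h2
        split at h2
        · exact (Finset.mem_filter.mp h2).1
        · exact h2
  have hpt0 : ∀ i j, 0 ≤ p i (gt i) j := fun i j => hp0 i (gt i) (hgA i) j
  have hpt1 : ∀ i, ∑ j, p i (gt i) j = 1 := fun i => hp1 i (gt i) (hgA i)
  have hq0 : ∀ j, 0 ≤ q j := hitProb_nonneg hpg0 hpg1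
  have hqB : ∀ j ∈ B, q j = 1 := fun j hj => hitProb_of_mem hj
  have hqF : ∀ j, j ∈ FStar Acts p B → q j = 0 := by
    intro j hj
    rw [← hFg] at hj
    obtain ⟨F, hFc, hjF⟩ := hj
    exact hitProb_eq_zero_of_closed hpg0 hpg1 hFc.1 hFc.2 hjF
  have sum_w : ∀ (i : S) (a : A), ∑ j, p i a j * q j = oneStep Acts p B g i a := by
    intro i a
    have hdisj : Disjoint B (GStar Acts p B) := by
      rw [Finset.disjoint_left]
      intro j hjB hjG
      simp only [GStar, Finset.mem_filter] at hjG
      exact hjG.2.1 hjB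
    have hcompl : ∀ j ∈ (B ∪ GStar Acts p B)ᶜ, p i a j * q j = 0 := by
      intro j hj
      rw [Finset.mem_compl, Finset.mem_union] at hj
      push_neg at hj
      have hjF : j ∈ FStar Acts p B := by
        by_contra hjF
        exact hj.2 (by simp only [GStar, Finset.mem_filter]
                       exact ⟨Finset.mem_univ j, hj.1, hjF⟩)
      rw [hqF j hjF, mul_zero]
    calc ∑ j, p i a j * q j
        = ∑ j ∈ B ∪ GStar Acts p B, p i a j * q j
            + ∑ j ∈ (B ∪ GStar Acts p B)ᶜ, p i a j * q j :=
          (Finset.sum_add_sum_compl _ _).symm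
      _ = ∑ j ∈ B ∪ GStar Acts p B, p i a j * q j := by
          rw [Finset.sum_eq_zero hcompl, add_zero]
      _ = ∑ j ∈ B, p i a j * q j + ∑ j ∈ GStar Acts p B, p i a j * q j :=
          Finset.sum_union hdisj
      _ = oneStep Acts p B g i a := by
          rw [oneStep, ← hq]
          congr 1
          exact Finset.sum_congr rfl fun j hj => by rw [hqB j hj, mul_one]
  have key : ∀ i ∉ B, oneStep Acts p B g i (gt i) ≤ q i := by
    intro i hiB
    by_cases hI : ImpActs Acts p B g i = ∅
    · rw [hgt1 i (Finset.mem_compl.mpr hiB) hI, ← sum_w i (g i)]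
      exact step_le_hitProb hpg0 hpg1 i
    · have h := (hgt2 i (Finset.mem_compl.mpr hiB) hI).1
      rw [ImpActs, Finset.mem_filter] at h
      rw [← hq] at h
      exact le_of_lt h.2
  have part1' : ∀ n j, hitLe (fun i j => p i (gt i) j) B n j ≤ q j := by
    intro n
    induction n with
    | zero =>
        intro j
        by_cases hj : j ∈ B
        · simp [hitLe, hj, hqB j hj]
        · simpa [hitLe, hj] using hq0 j
    | succ n ih =>
        intro j
        by_cases hj : j ∈ B
        · have e : hitLe (fun i j => p i (gt i) j) B (n + 1) j = 1 := by
            simp [hitLe, hj]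
          rw [e, hqB j hj]
        · have e : hitLe (fun i j => p i (gt i) j) B (n + 1) j
              = ∑ k, p j (gt j) k * hitLe (fun i j => p i (gt i) j) B n k := by
            simp only [hitLe]; rw [if_neg hj]
          rw [e]
          calc ∑ k, p j (gt j) k * hitLe (fun i j => p i (gt i) j) B n k
              ≤ ∑ k, p j (gt j) k * q k :=
                Finset.sum_le_sum fun k _ =>
                  mul_le_mul_of_nonneg_left (ih k) (hpt0 j k)
            _ = oneStep Acts p B g j (gt j) := sum_w j (gt j)
            _ ≤ q j := key j hj
  refine ⟨fun i _ => ciSup_le fun n => part1' n i, ?_⟩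
  intro hne
  obtain ⟨i, hi⟩ := Function.ne_iff.mp hne
  have hiB : i ∉ B := fun h => hi (hgtB i h)
  have hI : ImpActs Acts p B g i ≠ ∅ :=
    fun h => hi (hgt1 i (Finset.mem_compl.mpr hiB) h)
  have hmem := (hgt2 i (Finset.mem_compl.mpr hiB) hI).1
  rw [ImpActs, Finset.mem_filter, ← hq] at hmem
  have hlt : oneStep Acts p B g i (gt i) < q i := hmem.2
  refine ⟨i, Finset.mem_compl.mpr hiB, ?_⟩
  have hub : ∀ n, hitLe (fun i j => p i (gt i) j) B n i
      ≤ oneStep Acts p B g i (gt i) := by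
    intro n
    have h0 : 0 ≤ oneStep Acts p B g i (gt i) := by
      rw [← sum_w i (gt i)]
      exact Finset.sum_nonneg fun k _ => mul_nonneg (hpt0 i k) (hq0 k)
    cases n with
    | zero => simpa [hitLe, hiB] using h0
    | succ n =>
        have e : hitLe (fun i j => p i (gt i) j) B (n + 1) i
            = ∑ k, p i (gt i) k * hitLe (fun i j => p i (gt i) j) B n k := by
          simp only [hitLe]; rw [if_neg hiB]
        rw [e]
        calc ∑ k, p i (gt i) k * hitLe (fun i j => p i (gt i) j) B n k
            ≤ ∑ k, p i (gt i) k * q k :=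
              Finset.sum_le_sum fun k _ =>
                mul_le_mul_of_nonneg_left (part1' n k) (hpt0 i k)
          _ = oneStep Acts p B g i (gt i) := sum_w i (gt i)
  calc hitProb (fun i j => p i (gt i) j) B i
        ≤ oneStep Acts p B g i (gt i) := ciSup_le hub
    _ < q i := hlt
end
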